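/- arXiv:0709.2730 — 5 statements merged into one kernel-verified Lean document; each statement's English description precedes it below -/
import Mathlib

section
/- Let (Ω,F,P) be a complete probability space and let L0+ denote the set of (a.s.-equivalence classes of) nonnegative real-valued random variables, equipped with the topology of convergence in probability. A closed and convex subset C of L0+ is convexly compact if and only if C is bounded in probability. -/
open MeasureTheory Filter

/-- The set `L0+`: (versions of) nonnegative real-valued random variables. -/
def L0plus {Ω : Type*} [MeasurableSpace Ω] (μ : Measure Ω) : Set (Ω → ℝ) :=
  {f | Measurable f ∧ ∀ᵐ ω ∂μ, 0 ≤ f ω}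

/-- A set of random variables is *bounded in probability* if
`sup_{f ∈ C} P[|f| ≥ M] → 0` as `M → ∞`. -/
def BoundedInProbability {Ω : Type*} [MeasurableSpace Ω] (μ : Measure Ω)
    (C : Set (Ω → ℝ)) : Prop :=
  Tendsto (fun M : ℝ => ⨆ f ∈ C, μ {ω | M ≤ |f ω|}) atTop (nhds 0)

/-- A set of random variables is *closed in probability* (closed for the metrizable
topology of convergence in measure) if it contains every limit in measure of a
sequence of its elements. -/
def ClosedInMeasure {Ω : Type*} [MeasurableSpace Ω] (μ : Measure Ω)
    (C : Set (Ω → ℝ)) : Prop :=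
  ∀ (f : ℕ → Ω → ℝ) (g : Ω → ℝ), (∀ n, f n ∈ C) →
    TendstoInMeasure μ f atTop g → g ∈ C

/-- A convex set `C` of random variables is *convexly compact* (for the topology of
convergence in probability) if every family of closed (in probability) and convex
subsets of `C`, indexed by a nonempty set, with the finite-intersection property has
nonempty total intersection. -/
def ConvexlyCompactInMeasure {Ω : Type*} [MeasurableSpace Ω] (μ : Measure Ω)
    (C : Set (Ω → ℝ)) : Prop :=
  Convex ℝ C ∧
    ∀ (A : Type) (_ : Nonempty A) (F : A → Set (Ω → ℝ)),
      (∀ α, ClosedInMeasure μ (F α)) → (∀ α, Convex ℝ (F α)) → (∀ α, F α ⊆ C) →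
      (∀ D : Finset A, D.Nonempty → (⋂ α ∈ D, F α).Nonempty) →
      (⋂ α, F α).Nonempty


/-!
Bounded ⇒ convexly compact: given a directed decreasing family of nonempty closed convex subsets,
maximise the strictly concave utility `u(f) = E[1 - exp (-f)]` over each member and let `v` be the
infimum of these suprema. Since `(e^{-a/2} - e^{-b/2})² = 2 u((a+b)/2) - u(a) - u(b)` pointwise,
elements that are nearly optimal at a late stage are close in `L²` after the change of variables
`f ↦ exp (-f / 2)`, so along a cofinal sequence they converge a.e. Boundedness in probability keeps
the limit of `exp (-f / 2)` away from `0`, so the limit `g` is finite, and closedness puts `g` into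
every member of the family.

Convexly compact ⇒ bounded: otherwise there are `f_n ∈ C` with `P[f_n ≥ n + 1] ≥ δ`. The closed
convex sets `{f ∈ C | δ ≤ E[min (f / (n + 1)) 1]}` have the finite intersection property, but a
common element `g` would contradict `E[min (g / c) 1] → 0` as `c → ∞`.
-/

open Set Topology Real

section

variable {Ω : Type*} [MeasurableSpace Ω] {μ : Measure Ω}

theorem convex_L0plus : Convex ℝ (L0plus μ) := by
  rintro f ⟨hfm, hf0⟩ h ⟨hhm, hh0⟩ a b ha hb -
  refine ⟨(hfm.const_smul a).add (hhm.const_smul b), ?_⟩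
  filter_upwards [hf0, hh0] with ω hfω hhω
  simp only [Pi.add_apply, Pi.smul_apply, smul_eq_mul]
  positivity

theorem closedInMeasure_iInter {ι : Sort*} {F : ι → Set (Ω → ℝ)}
    (hF : ∀ i, ClosedInMeasure μ (F i)) : ClosedInMeasure μ (⋂ i, F i) :=
  fun f g hf hfg => mem_iInter.2 fun i => hF i f g (fun n => mem_iInter.1 (hf n) i) hfg

theorem BoundedInProbability.ae_not_tendsto_atTop {C : Set (Ω → ℝ)}
    (hC : BoundedInProbability μ C) {f : ℕ → Ω → ℝ} (hf : ∀ n, f n ∈ C) :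
    ∀ᵐ ω ∂μ, ¬Tendsto (fun n => f n ω) atTop atTop := by
  refine measure_eq_zero_iff_ae_notMem.1 (le_antisymm (ge_of_tendsto' hC fun M => ?_) zero_le)
  set T : ℕ → Set Ω := fun N => {ω | ∀ n, N ≤ n → M ≤ f n ω}
  have hT : Monotone T := fun N N' hN ω hω n hn => hω n (hN.trans hn)
  calc μ {ω | Tendsto (fun n => f n ω) atTop atTop}
      ≤ μ (⋃ N, T N) := measure_mono fun ω hω => mem_iUnion.2 (eventually_atTop.1
        (tendsto_atTop.1 hω M))
    _ = ⨆ N, μ (T N) := hT.measure_iUnion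
    _ ≤ ⨆ g ∈ C, μ {ω | M ≤ |g ω|} := iSup_le fun N => le_iSup₂_of_le (f N) (hf N)
        (measure_mono fun ω hω => (hω N le_rfl).trans (le_abs_self _))

theorem ae_summable_of_summable_integral {Z : ℕ → Ω → ℝ} (hZ : ∀ n, Integrable (Z n) μ)
    (hZ0 : ∀ n, 0 ≤ᵐ[μ] Z n) (hs : Summable fun n => ∫ ω, Z n ω ∂μ) :
    ∀ᵐ ω ∂μ, Summable fun n => Z n ω := by
  have hmeas : ∀ n, AEMeasurable (fun ω => ENNReal.ofReal (Z n ω)) μ :=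
    fun n => (hZ n).aemeasurable.ennreal_ofReal
  have hfin : ∫⁻ ω, ∑' n, ENNReal.ofReal (Z n ω) ∂μ ≠ ⊤ := by
    rw [lintegral_tsum hmeas]
    simp_rw [← ofReal_integral_eq_lintegral_ofReal (hZ _) (hZ0 _)]
    rw [← ENNReal.ofReal_tsum_of_nonneg (fun n => integral_nonneg_of_ae (hZ0 n)) hs]
    exact ENNReal.ofReal_ne_top
  filter_upwards [ae_lt_top' (AEMeasurable.tsum hmeas) hfin, ae_all_iff.2 hZ0]
    with ω hω hω0
  exact (ENNReal.summable_toReal hω.ne).congr fun n => ENNReal.toReal_ofReal (hω0 n)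

theorem ae_tendsto_zero_of_summable_integral_sq {Y : ℕ → Ω → ℝ}
    (hY : ∀ n, Integrable (fun ω => Y n ω ^ 2) μ) (hs : Summable fun n => ∫ ω, Y n ω ^ 2 ∂μ) :
    ∀ᵐ ω ∂μ, Tendsto (fun n => Y n ω) atTop (𝓝 0) := by
  filter_upwards [ae_summable_of_summable_integral hY
    (fun n => ae_of_all _ fun ω => sq_nonneg _) hs] with ω hω
  have hsqrt := (continuous_sqrt.tendsto 0).comp hω.tendsto_atTop_zero
  simp only [Function.comp_def, sqrt_sq_eq_abs, sqrt_zero] at hsqrt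
  exact tendsto_zero_iff_abs_tendsto_zero _ |>.2 hsqrt

theorem ae_cauchySeq_of_integral_sq_sub_le {Y : ℕ → Ω → ℝ} {c : ℝ}
    (hY : ∀ n, Integrable (fun ω => (Y (n + 1) ω - Y n ω) ^ 2) μ)
    (hle : ∀ n, ∫ ω, (Y (n + 1) ω - Y n ω) ^ 2 ∂μ ≤ c * (1 / 4) ^ n) :
    ∀ᵐ ω ∂μ, CauchySeq fun n => Y n ω := by
  have hs : Summable fun n => ∫ ω, 2 ^ n * (Y (n + 1) ω - Y n ω) ^ 2 ∂μ := by
    refine .of_nonneg_of_le (fun n => integral_nonneg fun ω => by positivity) (fun n => ?_)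
      (summable_geometric_two.mul_left c)
    have h4 : (1 / 4 : ℝ) ^ n = (1 / 2) ^ n * (1 / 2) ^ n := by rw [← mul_pow]; norm_num
    have h2 : (2 : ℝ) ^ n * (1 / 2) ^ n = 1 := by rw [← mul_pow]; norm_num
    rw [integral_const_mul]
    calc (2:ℝ) ^ n * ∫ ω, (Y (n + 1) ω - Y n ω) ^ 2 ∂μ ≤ 2 ^ n * (c * (1 / 4) ^ n) := by
          gcongr; exact hle n
      _ = c * (1 / 2) ^ n := by rw [h4]; linear_combination c * (1 / 2) ^ n * h2
  filter_upwards [ae_summable_of_summable_integral (fun n => (hY n).const_mul _)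
    (fun n => ae_of_all _ fun ω => by positivity) hs] with ω hω
  refine cauchySeq_of_summable_dist (.of_nonneg_of_le (fun n => dist_nonneg) (fun n => ?_)
    ((hω.add summable_geometric_two).div_const 2))
  have amgm : ∀ x t s : ℝ, 0 < t → t * s = 1 → |x| ≤ (t * x ^ 2 + s) / 2 := fun x t s ht hts => by
    refine le_of_mul_le_mul_left ?_ ht
    have : t * ((t * x ^ 2 + s) / 2) = ((t * |x|) ^ 2 + 1) / 2 := by
      rw [mul_pow, sq_abs]; linear_combination (1 / 2) * hts
    rw [this]
    nlinarith [sq_nonneg (t * |x| - 1)]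
  rw [dist_comm, Real.dist_eq]
  exact amgm _ _ _ (by positivity) (by rw [← mul_pow]; norm_num)

theorem tendsto_atTop_of_tendsto_exp_neg_half_zero {α : Type*} {l : Filter α} {a : α → ℝ}
    (h : Tendsto (fun x => exp (-a x / 2)) l (𝓝 0)) : Tendsto a l atTop := by
  have := (tendsto_exp_comp_nhds_zero.1 h).const_mul_atBot (show (0:ℝ) < 2 by norm_num)
  simpa using tendsto_neg_atBot_iff.1 (this.congr fun x => by ring)

theorem tendsto_of_tendsto_exp_neg_half {α : Type*} {l : Filter α} {a : α → ℝ} {p : ℝ}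
    (hp : 0 < p) (h : Tendsto (fun x => exp (-a x / 2)) l (𝓝 p)) :
    Tendsto a l (𝓝 (-2 * log p)) := by
  refine Tendsto.congr (fun x => ?_) (((continuousAt_log hp.ne').tendsto.comp h).const_mul (-2))
  simp only [Function.comp_apply, log_exp]
  ring

end

theorem Convex.half_smul_add_half_smul_mem {E : Type*} [AddCommMonoid E] [Module ℝ E]
    {K : Set E} (hK : Convex ℝ K) {x y : E} (hx : x ∈ K) (hy : y ∈ K) :
    (1 / 2 : ℝ) • x + (1 / 2 : ℝ) • y ∈ K :=
  hK hx hy (by norm_num) (by norm_num) (by norm_num)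

section ExpUtility

variable {Ω : Type*} [MeasurableSpace Ω] {μ : Measure Ω}

noncomputable def expUtility (μ : Measure Ω) (f : Ω → ℝ) : ℝ := ∫ ω, (1 - exp (-f ω)) ∂μ

noncomputable def supExpUtility (μ : Measure Ω) (K : Set (Ω → ℝ)) : ℝ :=
  sSup (expUtility μ '' K)

theorem one_sub_exp_neg_mem_Icc {x : ℝ} (hx : 0 ≤ x) : 1 - exp (-x) ∈ Icc (0 : ℝ) 1 :=
  ⟨sub_nonneg.2 (exp_le_one_iff.2 (neg_nonpos.2 hx)), sub_le_self _ (exp_pos _).le⟩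

theorem expUtility_nonneg {f : Ω → ℝ} (hf : f ∈ L0plus μ) : 0 ≤ expUtility μ f :=
  integral_nonneg_of_ae (hf.2.mono fun _ hω => (one_sub_exp_neg_mem_Icc hω).1)

theorem exists_lt_expUtility_of_lt_supExpUtility {K : Set (Ω → ℝ)} (hne : K.Nonempty) {t : ℝ}
    (ht : t < supExpUtility μ K) : ∃ f ∈ K, t < expUtility μ f := by
  obtain ⟨_, ⟨f, hf, rfl⟩, hlt⟩ := exists_lt_of_lt_csSup (hne.image _) ht
  exact ⟨f, hf, hlt⟩

variable [IsFiniteMeasure μ]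

theorem integrable_one_sub_exp_neg {f : Ω → ℝ} (hf : f ∈ L0plus μ) :
    Integrable (fun ω => 1 - exp (-f ω)) μ := by
  refine .of_bound (by have := hf.1; fun_prop) 1 ?_
  filter_upwards [hf.2] with ω hω
  exact abs_le.2 ⟨by linarith [(one_sub_exp_neg_mem_Icc hω).1], (one_sub_exp_neg_mem_Icc hω).2⟩

theorem expUtility_le_measureReal_univ {f : Ω → ℝ} (hf : f ∈ L0plus μ) :
    expUtility μ f ≤ μ.real univ :=
  (integral_mono (integrable_one_sub_exp_neg hf) (integrable_const 1)
    fun ω => sub_le_self _ (exp_pos _).le).trans_eq (by simp)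

theorem sq_sub_exp_neg_half (a b : ℝ) :
    (exp (-a / 2) - exp (-b / 2)) ^ 2
      = 2 * (1 - exp (-(1 / 2 * a + 1 / 2 * b))) - (1 - exp (-a)) - (1 - exp (-b)) := by
  have hsq : ∀ x : ℝ, exp (-x / 2) ^ 2 = exp (-x) := fun x => by rw [← exp_nat_mul]; ring_nf
  have hmul : exp (-a / 2) * exp (-b / 2) = exp (-(1 / 2 * a + 1 / 2 * b)) := by
    rw [← exp_add]; ring_nf
  linear_combination hsq a + hsq b - 2 * hmul

theorem integrable_one_sub_exp_neg_midpoint {f h : Ω → ℝ} (hf : f ∈ L0plus μ)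
    (hh : h ∈ L0plus μ) : Integrable (fun ω => 1 - exp (-(1 / 2 * f ω + 1 / 2 * h ω))) μ :=
  integrable_one_sub_exp_neg (convex_L0plus.half_smul_add_half_smul_mem hf hh)

theorem integrable_sq_sub_exp_neg_half {f h : Ω → ℝ} (hf : f ∈ L0plus μ) (hh : h ∈ L0plus μ) :
    Integrable (fun ω => (exp (-f ω / 2) - exp (-h ω / 2)) ^ 2) μ := by
  have hmid := integrable_one_sub_exp_neg_midpoint (μ := μ) hf hh
  refine (((hmid.const_mul 2).sub (integrable_one_sub_exp_neg hf)).sub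
    (integrable_one_sub_exp_neg hh)).congr (ae_of_all _ fun ω => ?_)
  simp [sq_sub_exp_neg_half]

theorem integral_sq_sub_exp_neg_half {f h : Ω → ℝ} (hf : f ∈ L0plus μ) (hh : h ∈ L0plus μ) :
    ∫ ω, (exp (-f ω / 2) - exp (-h ω / 2)) ^ 2 ∂μ
      = 2 * expUtility μ ((1 / 2 : ℝ) • f + (1 / 2 : ℝ) • h) - expUtility μ f
        - expUtility μ h := by
  have hmid := integrable_one_sub_exp_neg_midpoint (μ := μ) hf hh
  simp_rw [sq_sub_exp_neg_half]
  rw [integral_sub _ (integrable_one_sub_exp_neg hh),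
    integral_sub (hmid.const_mul 2) (integrable_one_sub_exp_neg hf), integral_const_mul]
  · rfl
  · exact (hmid.const_mul 2).sub (integrable_one_sub_exp_neg hf)

theorem expUtility_le_supExpUtility {K : Set (Ω → ℝ)} (hK : K ⊆ L0plus μ) {f : Ω → ℝ}
    (hf : f ∈ K) : expUtility μ f ≤ supExpUtility μ K :=
  le_csSup ⟨μ.real univ, by rintro _ ⟨g, hg, rfl⟩; exact expUtility_le_measureReal_univ (hK hg)⟩
    ⟨f, hf, rfl⟩

theorem supExpUtility_mono {K K' : Set (Ω → ℝ)} (hK' : K' ⊆ L0plus μ) (hne : K.Nonempty)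
    (h : K ⊆ K') : supExpUtility μ K ≤ supExpUtility μ K' :=
  csSup_le (hne.image _) <| by
    rintro _ ⟨f, hf, rfl⟩
    exact expUtility_le_supExpUtility hK' (h hf)

theorem supExpUtility_nonneg {K : Set (Ω → ℝ)} (hK : K ⊆ L0plus μ) (hne : K.Nonempty) :
    0 ≤ supExpUtility μ K :=
  (expUtility_nonneg (hK hne.some_mem)).trans (expUtility_le_supExpUtility hK hne.some_mem)

theorem integral_sq_sub_exp_neg_half_le {K : Set (Ω → ℝ)} (hK : K ⊆ L0plus μ)
    (hconv : Convex ℝ K) {f h : Ω → ℝ} (hf : f ∈ K) (hh : h ∈ K) {s q : ℝ}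
    (hfs : s - q < expUtility μ f) (hhs : s - q < expUtility μ h)
    (hKs : supExpUtility μ K < s + q) :
    ∫ ω, (exp (-f ω / 2) - exp (-h ω / 2)) ^ 2 ∂μ ≤ 4 * q := by
  have hmid := expUtility_le_supExpUtility (μ := μ) hK
    (hconv.half_smul_add_half_smul_mem hf hh)
  rw [integral_sq_sub_exp_neg_half (hK hf) (hK hh)]
  linarith

end ExpUtility

theorem exists_monotone_lt_ciInf_add {ι : Type*} [SemilatticeSup ι] [Nonempty ι] {v : ι → ℝ}
    (hv : Antitone v) {ε : ℕ → ℝ} (hε : ∀ n, 0 < ε n) :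
    ∃ E : ℕ → ι, Monotone E ∧ ∀ n, v (E n) < (⨅ i, v i) + ε n := by
  choose D hD using fun n => exists_lt_of_ciInf_lt (lt_add_of_pos_right (⨅ i, v i) (hε n))
  exact ⟨partialSups D, partialSups_monotone D,
    fun n => (hv (le_partialSups D n)).trans_lt (hD n)⟩

namespace BoundedInProbability

variable {Ω : Type*} [MeasurableSpace Ω] {μ : Measure Ω} [IsFiniteMeasure μ] {C : Set (Ω → ℝ)}

theorem exists_ae_tendsto_of_integral_sq_sub_le (hC : BoundedInProbability μ C)
    (hCL : C ⊆ L0plus μ) {N : ℕ → Set (Ω → ℝ)} (hN : Antitone N) (hNC : ∀ n, N n ⊆ C)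
    (hne : ∀ n, (N n).Nonempty)
    (hdiam : ∀ n, ∀ f ∈ N n, ∀ h ∈ N n,
      ∫ ω, (exp (-f ω / 2) - exp (-h ω / 2)) ^ 2 ∂μ ≤ 4 * (1 / 4) ^ n) :
    ∃ g : Ω → ℝ, ∀ h : ℕ → Ω → ℝ, (∀ n, h n ∈ N n) →
      ∀ᵐ ω ∂μ, Tendsto (fun n => h n ω) atTop (𝓝 (g ω)) := by
  choose f hf using hne
  have hfL : ∀ n, f n ∈ L0plus μ := fun n => hCL (hNC n (hf n))
  have hcauchy : ∀ᵐ ω ∂μ, CauchySeq fun n => exp (-f n ω / 2) :=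
    ae_cauchySeq_of_integral_sq_sub_le (fun n => integrable_sq_sub_exp_neg_half (hfL _) (hfL _))
      fun n => hdiam n _ (hN n.le_succ (hf (n + 1))) _ (hf n)
  set φ : Ω → ℝ := fun ω => limUnder atTop fun n => exp (-f n ω / 2)
  have hφ : ∀ᵐ ω ∂μ, Tendsto (fun n => exp (-f n ω / 2)) atTop (𝓝 (φ ω)) :=
    hcauchy.mono fun ω h => h.tendsto_limUnder
  have hφpos : ∀ᵐ ω ∂μ, 0 < φ ω := by
    filter_upwards [hφ, hC.ae_not_tendsto_atTop fun n => hNC n (hf n)] with ω hφω hω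
    refine (ge_of_tendsto' hφω fun n => (exp_pos _).le).lt_of_ne' fun h0 => hω ?_
    exact tendsto_atTop_of_tendsto_exp_neg_half_zero (h0 ▸ hφω)
  refine ⟨fun ω => -2 * log (φ ω), fun h hh => ?_⟩
  have hclose : ∀ᵐ ω ∂μ, Tendsto (fun n => exp (-h n ω / 2) - exp (-f n ω / 2)) atTop (𝓝 0) :=
    ae_tendsto_zero_of_summable_integral_sq
      (fun n => integrable_sq_sub_exp_neg_half (hCL (hNC n (hh n))) (hfL n))
      (.of_nonneg_of_le (fun n => integral_nonneg fun ω => sq_nonneg _)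
        (fun n => hdiam n _ (hh n) _ (hf n))
        ((summable_geometric_of_lt_one (by norm_num) (by norm_num)).mul_left 4))
  filter_upwards [hφ, hφpos, hclose] with ω hφω hpos hω
  exact tendsto_of_tendsto_exp_neg_half hpos (by simpa using hω.add hφω)

theorem iInter_nonempty_of_antitone (hC : BoundedInProbability μ C) (hCL : C ⊆ L0plus μ)
    {ι : Type*} [SemilatticeSup ι] [Nonempty ι] {K : ι → Set (Ω → ℝ)} (hK : Antitone K)
    (hKC : ∀ i, K i ⊆ C) (hne : ∀ i, (K i).Nonempty) (hclosed : ∀ i, ClosedInMeasure μ (K i))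
    (hconv : ∀ i, Convex ℝ (K i)) : (⋂ i, K i).Nonempty := by
  have hKL : ∀ i, K i ⊆ L0plus μ := fun i => (hKC i).trans hCL
  set v : ι → ℝ := fun i => supExpUtility μ (K i)
  have hv : Antitone v := fun i j hij => supExpUtility_mono (hKL i) (hne j) (hK hij)
  have hvb : BddBelow (range v) :=
    ⟨0, by rintro _ ⟨i, rfl⟩; exact supExpUtility_nonneg (hKL i) (hne i)⟩
  set q : ℕ → ℝ := fun n => (1 / 4) ^ n
  have hq : Antitone q := fun m n hmn => pow_le_pow_of_le_one (by norm_num) (by norm_num) hmn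
  obtain ⟨E, hE, hvE⟩ := exists_monotone_lt_ciInf_add hv (ε := q) fun n => by positivity
  set N : ℕ → Set (Ω → ℝ) := fun n => {h ∈ K (E n) | (⨅ i, v i) - q n < expUtility μ h}
  have hmeet : ∀ n i, (N n ∩ K i).Nonempty := by
    intro n i
    obtain ⟨h, hh, hlt⟩ := exists_lt_expUtility_of_lt_supExpUtility (hne (i ⊔ E n))
      (sub_lt_self (v (i ⊔ E n)) (show 0 < q n by positivity))
    exact ⟨h, ⟨hK le_sup_right hh, lt_of_le_of_lt (by linarith [ciInf_le hvb (i ⊔ E n)]) hlt⟩,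
      hK le_sup_left hh⟩
  have hN : Antitone N := fun m n hmn h hh =>
    ⟨hK (hE hmn) hh.1, lt_of_le_of_lt (by linarith [hq hmn]) hh.2⟩
  obtain ⟨g, hg⟩ := hC.exists_ae_tendsto_of_integral_sq_sub_le hCL hN
    (fun n => (sep_subset _ _).trans (hKC _)) (fun n => (hmeet n (E 0)).mono inter_subset_left)
    fun n f hf h hh => integral_sq_sub_exp_neg_half_le (hKL _) (hconv _) hf.1 hh.1 hf.2 hh.2
      (hvE n)
  refine ⟨g, mem_iInter.2 fun i => ?_⟩
  choose h hh using fun n => hmeet n i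
  exact hclosed i h g (fun n => (hh n).2) (tendstoInMeasure_of_tendsto_ae
    (fun n => (hKL i (hh n).2).1.aestronglyMeasurable) (hg h fun n => (hh n).1))

theorem convexlyCompactInMeasure (hC : BoundedInProbability μ C) (hCL : C ⊆ L0plus μ)
    (hconv : Convex ℝ C) : ConvexlyCompactInMeasure μ C := by
  classical
  refine ⟨hconv, fun A ⟨α₀⟩ F hFclosed hFconv hFC hfip => ?_⟩
  obtain ⟨g, hg⟩ := hC.iInter_nonempty_of_antitone hCL
    (K := fun D : Finset A => ⋂ α ∈ insert α₀ D, F α)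
    (fun D D' h => biInter_mono (Finset.insert_subset_insert _ h) fun _ _ => le_rfl)
    (fun D => (biInter_subset_of_mem (Finset.mem_insert_self _ _)).trans (hFC α₀))
    (fun D => hfip _ (Finset.insert_nonempty _ _))
    (fun D => closedInMeasure_iInter fun α => closedInMeasure_iInter fun _ => hFclosed α)
    (fun D => convex_iInter₂ fun α _ => hFconv α)
  exact ⟨g, mem_iInter.2 fun α => mem_iInter₂.1 (mem_iInter.1 hg {α}) α
    (Finset.mem_insert_of_mem (Finset.mem_singleton_self α))⟩

end BoundedInProbability

section TruncMean

variable {Ω : Type*} [MeasurableSpace Ω] {μ : Measure Ω}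

noncomputable def truncMean (μ : Measure Ω) (c : ℝ) (f : Ω → ℝ) : ℝ := ∫ ω, min (f ω / c) 1 ∂μ

theorem ae_norm_min_div_one_le {f : Ω → ℝ} (hf : f ∈ L0plus μ) {c : ℝ} (hc : 0 ≤ c) :
    ∀ᵐ ω ∂μ, ‖min (f ω / c) 1‖ ≤ 1 := by
  filter_upwards [hf.2] with ω hω
  rw [Real.norm_of_nonneg (le_min (div_nonneg hω hc) zero_le_one)]
  exact min_le_right _ _

variable [IsFiniteMeasure μ]

theorem integrable_min_div_one {f : Ω → ℝ} (hf : f ∈ L0plus μ) {c : ℝ} (hc : 0 ≤ c) :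
    Integrable (fun ω => min (f ω / c) 1) μ :=
  .of_bound (by have := hf.1; fun_prop) 1 (ae_norm_min_div_one_le hf hc)

theorem le_truncMean_of_tendstoInMeasure {f : ℕ → Ω → ℝ} {g : Ω → ℝ} (hf : ∀ n, f n ∈ L0plus μ)
    (hfg : TendstoInMeasure μ f atTop g) {c δ : ℝ} (hc : 0 ≤ c)
    (hδ : ∀ n, δ ≤ truncMean μ c (f n)) : δ ≤ truncMean μ c g := by
  obtain ⟨ns, -, hae⟩ := hfg.exists_seq_tendsto_ae
  refine ge_of_tendsto' (tendsto_integral_of_dominated_convergence (fun _ => 1)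
    (fun k => (integrable_min_div_one (hf (ns k)) hc).aestronglyMeasurable) (integrable_const 1)
    (fun k => ae_norm_min_div_one_le (hf (ns k)) hc) ?_) fun k => hδ (ns k)
  filter_upwards [hae] with ω hω
  exact (hω.div_const c).min tendsto_const_nhds

theorem truncMean_concave {f h : Ω → ℝ} (hf : f ∈ L0plus μ) (hh : h ∈ L0plus μ) {c : ℝ}
    (hc : 0 ≤ c) {a b : ℝ} (ha : 0 ≤ a) (hb : 0 ≤ b) (hab : a + b = 1) :
    a * truncMean μ c f + b * truncMean μ c h ≤ truncMean μ c (a • f + b • h) := by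
  have hif := (integrable_min_div_one hf hc).const_mul a
  have hih := (integrable_min_div_one hh hc).const_mul b
  rw [truncMean, truncMean, ← integral_const_mul, ← integral_const_mul, ← integral_add hif hih]
  refine integral_mono (hif.add hih)
    (integrable_min_div_one (convex_L0plus hf hh ha hb hab) hc) fun ω => ?_
  simp only [Pi.add_apply, Pi.smul_apply, smul_eq_mul]
  refine le_min ?_ ?_
  · rw [add_div, mul_div_assoc, mul_div_assoc]
    exact add_le_add (mul_le_mul_of_nonneg_left (min_le_left _ _) ha)
      (mul_le_mul_of_nonneg_left (min_le_left _ _) hb)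
  · exact (add_le_add (mul_le_of_le_one_right ha (min_le_right _ _))
      (mul_le_of_le_one_right hb (min_le_right _ _))).trans hab.le

theorem measureReal_le_truncMean {f : Ω → ℝ} (hf : f ∈ L0plus μ) {c c' : ℝ} (hc : 0 < c)
    (hcc' : c ≤ c') : μ.real {ω | c' ≤ |f ω|} ≤ truncMean μ c f := by
  have hS : MeasurableSet {ω | c' ≤ |f ω|} := measurableSet_le measurable_const hf.1.abs
  rw [← integral_indicator_one hS]
  refine integral_mono_ae ((integrable_const 1).indicator hS) (integrable_min_div_one hf hc.le) ?_
  filter_upwards [hf.2] with ω hω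
  by_cases hmem : ω ∈ {ω | c' ≤ |f ω|}
  · rw [indicator_of_mem hmem]
    exact le_min ((one_le_div hc).2 (hcc'.trans (hmem.trans_eq (abs_of_nonneg hω)))) le_rfl
  · rw [indicator_of_notMem hmem]
    exact le_min (div_nonneg hω hc.le) zero_le_one

theorem tendsto_truncMean_atTop {f : Ω → ℝ} (hf : f ∈ L0plus μ) :
    Tendsto (fun c => truncMean μ c f) atTop (𝓝 0) := by
  have hlim : Tendsto (fun c => truncMean μ c f) atTop (𝓝 (∫ _ω, (0 : ℝ) ∂μ)) :=
    tendsto_integral_filter_of_dominated_convergence (fun _ => 1)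
      ((eventually_ge_atTop 0).mono fun c hc => (integrable_min_div_one hf hc).aestronglyMeasurable)
      ((eventually_ge_atTop 0).mono fun c hc => ae_norm_min_div_one_le hf hc)
      (integrable_const 1) (ae_of_all _ fun ω => by
        simpa using (tendsto_const_nhds.div_atTop tendsto_id).min
          (tendsto_const_nhds (x := (1 : ℝ))))
  simpa using hlim

end TruncMean

section Forward

variable {Ω : Type*} [MeasurableSpace Ω] {μ : Measure Ω} [IsFiniteMeasure μ] {C : Set (Ω → ℝ)}

theorem Convex.setOf_le_truncMean (hconv : Convex ℝ C) (hCL : C ⊆ L0plus μ) {c : ℝ}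
    (hc : 0 ≤ c) (δ : ℝ) : Convex ℝ {f ∈ C | δ ≤ truncMean μ c f} := by
  rintro f ⟨hfC, hf⟩ h ⟨hhC, hh⟩ a b ha hb hab
  refine ⟨hconv hfC hhC ha hb hab, ?_⟩
  calc δ = a * δ + b * δ := by rw [← add_mul, hab, one_mul]
    _ ≤ a * truncMean μ c f + b * truncMean μ c h := by gcongr
    _ ≤ truncMean μ c (a • f + b • h) := truncMean_concave (hCL hfC) (hCL hhC) hc ha hb hab

theorem ClosedInMeasure.setOf_le_truncMean (hclosed : ClosedInMeasure μ C) (hCL : C ⊆ L0plus μ)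
    {c : ℝ} (hc : 0 ≤ c) (δ : ℝ) : ClosedInMeasure μ {f ∈ C | δ ≤ truncMean μ c f} :=
  fun f g hf hfg => ⟨hclosed f g (fun n => (hf n).1) hfg,
    le_truncMean_of_tendstoInMeasure (fun n => hCL (hf n).1) hfg hc fun n => (hf n).2⟩

theorem exists_le_measureReal_of_not_boundedInProbability (h : ¬BoundedInProbability μ C) :
    ∃ δ > 0, ∀ M : ℝ, ∃ f ∈ C, δ ≤ μ.real {ω | M ≤ |f ω|} := by
  contrapose! h
  refine ENNReal.tendsto_nhds_zero.2 fun ε hε => ?_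
  rcases eq_or_ne ε ⊤ with rfl | hεtop
  · exact Eventually.of_forall fun _ => le_top
  obtain ⟨M, hM⟩ := h ε.toReal (ENNReal.toReal_pos hε.ne' hεtop)
  refine eventually_atTop.2 ⟨M, fun M' hM' => iSup₂_le fun f hf => ?_⟩
  calc μ {ω | M' ≤ |f ω|} ≤ μ {ω | M ≤ |f ω|} := measure_mono fun ω hω => hM'.trans hω
    _ ≤ ε := ((ENNReal.toReal_lt_toReal (measure_ne_top _ _) hεtop).1 (hM f hf)).le

theorem ConvexlyCompactInMeasure.boundedInProbability (hcc : ConvexlyCompactInMeasure μ C)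
    (hCL : C ⊆ L0plus μ) (hclosed : ClosedInMeasure μ C) : BoundedInProbability μ C := by
  by_contra hb
  obtain ⟨δ, hδ, hlarge⟩ := exists_le_measureReal_of_not_boundedInProbability hb
  choose f hfC hfδ using fun n : ℕ => hlarge (n + 1)
  set G : ℕ → Set (Ω → ℝ) := fun n => {g ∈ C | δ ≤ truncMean μ (n + 1) g}
  obtain ⟨g, hg⟩ := hcc.2 ℕ ⟨0⟩ G (fun n => hclosed.setOf_le_truncMean hCL (by positivity) δ)
    (fun n => hcc.1.setOf_le_truncMean hCL (by positivity) δ) (fun n => sep_subset _ _)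
    fun D hD => ⟨f (D.max' hD), mem_iInter₂.2 fun n hn => ⟨hfC _, (hfδ _).trans
      (measureReal_le_truncMean (hCL (hfC _)) (by positivity)
        (by exact_mod_cast Nat.succ_le_succ (D.le_max' n hn)))⟩⟩
  have hgG : ∀ n, g ∈ G n := mem_iInter.1 hg
  have hlim := (tendsto_truncMean_atTop (hCL (hgG 0).1)).comp
    (tendsto_natCast_atTop_atTop.atTop_add (tendsto_const_nhds (x := (1 : ℝ))))
  exact hδ.not_ge (ge_of_tendsto' hlim fun n => (hgG n).2)

end Forward

theorem convexlyCompactInMeasure_iff_boundedInProbability_general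
    {Ω : Type*} [MeasurableSpace Ω] (μ : Measure Ω) [IsProbabilityMeasure μ]
    (C : Set (Ω → ℝ)) (hsub : C ⊆ L0plus μ)
    (hclosed : ClosedInMeasure μ C) (hconv : Convex ℝ C) :
    ConvexlyCompactInMeasure μ C ↔ BoundedInProbability μ C :=
  ⟨fun hcc => hcc.boundedInProbability hsub hclosed,
    fun hC => hC.convexlyCompactInMeasure hsub hconv⟩

/-- On a complete probability space, a closed and convex subset `C` of
`L0+` is convexly compact if and only if it is bounded in probability. -/
theorem convexlyCompactInMeasure_iff_boundedInProbability
    {Ω : Type*} [MeasurableSpace Ω] (μ : Measure Ω) [IsProbabilityMeasure μ]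
    [μ.IsComplete]
    (C : Set (Ω → ℝ)) (hsub : C ⊆ L0plus μ)
    (hclosed : ClosedInMeasure μ C) (hconv : Convex ℝ C) :
    ConvexlyCompactInMeasure μ C ↔ BoundedInProbability μ C :=
  convexlyCompactInMeasure_iff_boundedInProbability_general μ C hsub hclosed hconv
end

section
/- Let X be a topological vector space and let G : X → (−∞,∞] be bounded from below and convexly coercive. Then G attains its infimum on X, i.e., there exists x₀* ∈ X with G(x₀*) = inf_{x∈X} G(x). -/
/-!
Let `m = ⨅ x, G x`. If a point of the convexly compact sublevel set `{G ≤ l₀}` already has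
value `m` we are done; otherwise `m < l₀`, and the sublevel sets `{G ≤ l}` for `m < l < l₀`
form a nested family of nonempty closed convex subsets of `{G ≤ l₀}`. Convex compactness
gives a point in all of them, and its value is `≤ l` for every `l > m`, hence equals `m`.
-/

/-- A convex subset `C` of a topological vector space is *convexly compact* if every
family of closed and convex subsets of `C`, indexed by a nonempty set, having the
finite-intersection property, has nonempty total intersection. -/
def ConvexlyCompact {X : Type*} [AddCommGroup X] [Module ℝ X] [TopologicalSpace X]
    (C : Set X) : Prop :=
  Convex ℝ C ∧
    ∀ (A : Type) (_ : Nonempty A) (F : A → Set X),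
      (∀ α, IsClosed (F α)) → (∀ α, Convex ℝ (F α)) → (∀ α, F α ⊆ C) →
      (∀ D : Finset A, D.Nonempty → (⋂ α ∈ D, F α).Nonempty) →
      (⋂ α, F α).Nonempty

section ConvexlyCompact

variable {X : Type*} [AddCommGroup X] [Module ℝ X] [TopologicalSpace X]

theorem ConvexlyCompact.nonempty_iInter_of_directed {C : Set X} (hC : ConvexlyCompact C)
    {ι : Type} [Nonempty ι] {F : ι → Set X} (hdir : Directed (· ⊇ ·) F)
    (hne : ∀ i, (F i).Nonempty) (hclosed : ∀ i, IsClosed (F i))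
    (hconvex : ∀ i, Convex ℝ (F i)) (hsub : ∀ i, F i ⊆ C) :
    (⋂ i, F i).Nonempty := by
  refine hC.2 ι ‹_› F hclosed hconvex hsub fun D _ => ?_
  obtain ⟨k, hk⟩ := hdir.finset_le D
  obtain ⟨x, hx⟩ := hne k
  exact ⟨x, Set.mem_iInter₂.mpr fun i hi => hk i hi hx⟩

theorem exists_eq_iInf_of_convexlyCompact_sublevel {β : Type} [CompleteLinearOrder β]
    [DenselyOrdered β] (G : X → β)
    (hclosed : ∀ l, ⨅ x, G x < l → IsClosed {x | G x ≤ l})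
    (hconvex : ∀ l, ⨅ x, G x < l → Convex ℝ {x | G x ≤ l})
    {l₀ : β} (hne : {x | G x ≤ l₀}.Nonempty) (hC : ConvexlyCompact {x | G x ≤ l₀}) :
    ∃ x₀, G x₀ = ⨅ x, G x := by
  set m := ⨅ x, G x
  obtain ⟨x₁, hx₁⟩ := hne
  by_cases hx₁m : G x₁ ≤ m
  · exact ⟨x₁, le_antisymm hx₁m (iInf_le _ _)⟩
  have hml₀ : m < l₀ := (not_le.mp hx₁m).trans_le hx₁
  have : Nonempty (Set.Ioo m l₀) := (Set.nonempty_Ioo.mpr hml₀).to_subtype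
  obtain ⟨x₀, hx₀⟩ := hC.nonempty_iInter_of_directed (F := fun l : Set.Ioo m l₀ => {x | G x ≤ l})
    (directed_of_isDirected_ge fun _ _ hlk _ hx => hx.trans hlk)
    (fun l => (iInf_lt_iff.mp l.2.1).imp fun _ => le_of_lt)
    (fun l => hclosed l l.2.1) (fun l => hconvex l l.2.1)
    (fun l _ hx => hx.trans l.2.2.le)
  refine ⟨x₀, le_antisymm (le_of_forall_gt_imp_ge_of_dense fun l hml => ?_) (iInf_le _ _)⟩
  obtain ⟨l', hml', hl'⟩ := exists_between (lt_min hml hml₀)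
  exact (Set.mem_iInter.mp hx₀ ⟨l', hml', hl'.trans_le (min_le_right _ _)⟩).trans
    (hl'.le.trans (min_le_left _ _))

end ConvexlyCompact

theorem convexly_coercive_attains_inf_general
    {X : Type*} [AddCommGroup X] [Module ℝ X] [TopologicalSpace X]
    (G : X → EReal)
    (hclosed : ∀ l : EReal, l ≠ ⊥ → IsClosed {x : X | G x ≤ l})
    (hconvex : ∀ l : EReal, l ≠ ⊥ → Convex ℝ {x : X | G x ≤ l})
    (hcoercive : ∃ l₀ : EReal, l₀ ≠ ⊥ ∧ {x : X | G x ≤ l₀}.Nonempty ∧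
      ConvexlyCompact {x : X | G x ≤ l₀}) :
    ∃ x₀ : X, G x₀ = ⨅ x : X, G x := by
  obtain ⟨l₀, -, hne, hC⟩ := hcoercive
  exact exists_eq_iInf_of_convexlyCompact_sublevel G (fun l hl => hclosed l hl.ne_bot)
    (fun l hl => hconvex l hl.ne_bot) hne hC

/-- A bounded-from-below, convexly coercive function
`G : X → (-∞,∞]` on a topological vector space attains its infimum: all the
lower-contour sets `L_G(l) = {x : G x ≤ l}`, `l ∈ (-∞,∞]`, are closed and convex, and
some `L_G(l₀)` is nonempty and convexly compact; then `G` attains its infimum on `X`. -/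
theorem convexly_coercive_attains_inf
    {X : Type*} [AddCommGroup X] [Module ℝ X] [TopologicalSpace X]
    [IsTopologicalAddGroup X] [ContinuousSMul ℝ X]
    (G : X → EReal)
    (hbdd : ∃ c : ℝ, ∀ x : X, (c : EReal) ≤ G x)
    (hclosed : ∀ l : EReal, l ≠ ⊥ → IsClosed {x : X | G x ≤ l})
    (hconvex : ∀ l : EReal, l ≠ ⊥ → Convex ℝ {x : X | G x ≤ l})
    (hcoercive : ∃ l₀ : EReal, l₀ ≠ ⊥ ∧ {x : X | G x ≤ l₀}.Nonempty ∧
      ConvexlyCompact {x : X | G x ≤ l₀}) :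
    ∃ x₀ : X, G x₀ = ⨅ x : X, G x :=
  convexly_coercive_attains_inf_general G hclosed hconvex hcoercive
end

section
/- Let (Ω,F,P) be a complete probability space, and let G : L0+ → (−∞,∞] be bounded from below such that: (1) for every λ ∈ ℝ the lower-contour set L_G(λ) = {f ∈ L0+ : G(f) ≤ λ} is convex and closed in probability, and (2) there exists λ₀ such that L_G(λ₀) is nonempty and bounded in probability. Then G attains its infimum on L0+. -/
open MeasureTheory Filter

/-!
Minimise `J h = ∫ exp (-h) dμ` over the sublevel sets `A n = {G ≤ λₙ}` with `λₙ ↓ inf G`.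
The identity `(exp (-x/2) - exp (-y/2))² = exp (-x) + exp (-y) - 2 exp (-(x+y)/2)` and the
convexity of `A n` force near-minimisers `gₙ ∈ A n` of `J` to satisfy
`∫ (exp (-gₙ/2) - exp (-gₖ/2))² → 0`. Where `gₙ, gₖ ≤ M` this integrand controls `|gₙ - gₖ|`,
and boundedness in probability makes that region almost everything, so `(gₙ)` is Cauchy in
measure. An a.e. limit of a subsequence lies in every closed `A n`, hence minimises `G`.
-/

open Real Set Topology
open scoped ENNReal

namespace Real

theorem sq_exp_neg_half_sub_exp_neg_half {x y m : ℝ} (hm : m + m = x + y) :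
    (exp (-(x / 2)) - exp (-(y / 2))) ^ 2 = exp (-x) + exp (-y) - 2 * exp (-m) := by
  have hsq : ∀ z : ℝ, exp (-(z / 2)) ^ 2 = exp (-z) := fun z => by
    rw [sq, ← exp_add]; ring_nf
  have hmul : exp (-(x / 2)) * exp (-(y / 2)) = exp (-m) := by
    rw [← exp_add]; congr 1; linarith
  rw [sub_sq, hsq, hsq, mul_assoc, hmul]; ring

theorem exp_neg_mul_sq_le_sq_exp_neg_half_sub {x y M ε : ℝ} (hx : x ≤ M) (hy : y ≤ M)
    (hε : 0 ≤ ε) (hxy : ε ≤ |x - y|) :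
    exp (-M) * (1 - exp (-(ε / 2))) ^ 2 ≤ (exp (-(x / 2)) - exp (-(y / 2))) ^ 2 := by
  wlog hle : x ≤ y generalizing x y
  · rw [abs_sub_comm] at hxy
    exact (this hy hx hxy (le_of_not_ge hle)).trans_eq (by ring)
  have hgap : ε ≤ y - x := by rwa [abs_sub_comm, abs_of_nonneg (sub_nonneg.2 hle)] at hxy
  have hfactor : 0 ≤ 1 - exp (-(ε / 2)) := sub_nonneg.2 (exp_le_one_iff.2 (by linarith))
  have hlower : exp (-(M / 2)) * (1 - exp (-(ε / 2))) ≤ exp (-(x / 2)) - exp (-(y / 2)) :=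
    calc exp (-(M / 2)) * (1 - exp (-(ε / 2)))
        ≤ exp (-(x / 2)) * (1 - exp (-(ε / 2))) :=
          mul_le_mul_of_nonneg_right (exp_le_exp.2 (by linarith)) hfactor
      _ = exp (-(x / 2)) - exp (-(x / 2) + -(ε / 2)) := by rw [exp_add]; ring
      _ ≤ exp (-(x / 2)) - exp (-(y / 2)) := by gcongr; linarith
  have hsplit : exp (-M) = exp (-(M / 2)) ^ 2 := by rw [sq, ← exp_add]; ring_nf
  rw [hsplit, ← mul_pow]
  exact pow_le_pow_left₀ (mul_nonneg (exp_pos _).le hfactor) hlower 2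

end Real

section CauchyInMeasure

variable {α E : Type*} [MeasurableSpace α] [PseudoMetricSpace E]

def CauchyInMeasure (μ : Measure α) (f : ℕ → α → E) : Prop :=
  ∀ ε : ℝ, 0 < ε → ∀ θ : ℝ≥0∞, 0 < θ → ∃ N, ∀ n ≥ N, ∀ k ≥ N,
    μ {x | ε ≤ dist (f n x) (f k x)} ≤ θ

variable {μ : Measure α}

theorem ae_cauchySeq_of_measure_dist_succ_le_geometric {u : ℕ → α → E}
    (hu : ∀ j, μ {x | (1 / 2 : ℝ) ^ j ≤ dist (u j x) (u (j + 1) x)} ≤ (1 / 2) ^ j) :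
    ∀ᵐ x ∂μ, CauchySeq fun j => u j x := by
  have hsum : ∑' j, μ {x | (1 / 2 : ℝ) ^ j ≤ dist (u j x) (u (j + 1) x)} ≠ ⊤ := by
    refine ne_top_of_le_ne_top ?_ (ENNReal.tsum_le_tsum hu)
    rw [ENNReal.tsum_geometric]
    norm_num
  filter_upwards [ae_eventually_notMem hsum] with x hx
  obtain ⟨J, hJ⟩ := eventually_atTop.1 hx
  rw [← cauchySeq_shift J]
  refine cauchySeq_of_le_geometric (1 / 2) ((1 / 2) ^ J) (by norm_num) fun j => ?_
  have hclose := not_le.1 (hJ (j + J) (Nat.le_add_left J j))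
  rw [mul_comm, ← pow_add, Nat.add_right_comm]
  exact hclose.le

theorem CauchyInMeasure.exists_subseq_tendsto_ae [CompleteSpace E] [MeasurableSpace E]
    [BorelSpace E] {f : ℕ → α → E} (hf : ∀ n, AEMeasurable (f n) μ)
    (h : CauchyInMeasure μ f) :
    ∃ φ : ℕ → ℕ, StrictMono φ ∧ ∃ g : α → E, Measurable g ∧
      ∀ᵐ x ∂μ, Tendsto (fun j => f (φ j) x) atTop (𝓝 (g x)) := by
  choose N hN using fun j : ℕ =>
    h ((1 / 2) ^ j) (by positivity) ((1 / 2) ^ j) (ENNReal.pow_pos (by norm_num) j)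
  obtain ⟨φ, hφ, hNφ⟩ := extraction_forall_of_eventually' (P := fun j k => N j ≤ k)
    fun j => ⟨N j, fun _ => id⟩
  have hcauchy := ae_cauchySeq_of_measure_dist_succ_le_geometric (μ := μ)
    (u := fun j => f (φ j)) fun j =>
      hN j _ (hNφ j) _ ((hNφ j).trans (hφ.monotone j.le_succ))
  obtain ⟨g, hg, hlim⟩ := measurable_limit_of_tendsto_metrizable_ae (fun j => hf (φ j))
    (hcauchy.mono fun x hx => cauchySeq_tendsto_of_complete hx)
  exact ⟨φ, hφ, g, hg, hlim⟩

end CauchyInMeasure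

theorem exists_uniformly_minimizing_seq_of_antitone {X : Type*} {A : ℕ → Set X} (hA : Antitone A)
    (hne : ∀ n, (A n).Nonempty) {J : X → ℝ} (hJ : ∃ C, ∀ x ∈ A 0, |J x| ≤ C) :
    ∃ g : ℕ → X, (∀ n, g n ∈ A n) ∧
      ∀ η > 0, ∃ N, ∀ n ≥ N, ∀ x ∈ A N, J (g n) ≤ J x + η := by
  obtain ⟨C, hC⟩ := hJ
  set s : ℕ → ℝ := fun n => sInf (J '' A n)
  have hbelow : ∀ n, BddBelow (J '' A n) := fun n =>
    ⟨-C, by rintro _ ⟨x, hx, rfl⟩; exact neg_le_of_abs_le (hC x (hA (Nat.zero_le n) hx))⟩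
  have hs_le : ∀ n, ∀ x ∈ A n, s n ≤ J x := fun n x hx => csInf_le (hbelow n) ⟨x, hx, rfl⟩
  have hs_mono : Monotone s := fun n k hnk =>
    csInf_le_csInf (hbelow n) ((hne k).image J) (image_mono (hA hnk))
  have hs_bdd : BddAbove (range s) := ⟨C, by
    rintro _ ⟨n, rfl⟩
    obtain ⟨x, hx⟩ := hne n
    exact (hs_le n x hx).trans (le_of_abs_le (hC x (hA (Nat.zero_le n) hx)))⟩
  set S := ⨆ n, s n
  -- Aiming at `S` rather than at `s n` makes the error `S - s N + 1 / (N + 1)` uniform in `n ≥ N`.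
  have hnear : ∀ n : ℕ, ∃ x ∈ A n, J x < S + 1 / (n + 1) := fun n => by
    obtain ⟨_, ⟨x, hx, rfl⟩, hlt⟩ := exists_lt_of_csInf_lt ((hne n).image J)
      ((le_ciSup hs_bdd n).trans_lt (lt_add_of_pos_right S Nat.one_div_pos_of_nat))
    exact ⟨x, hx, hlt⟩
  choose g hgA hgJ using hnear
  have herr : Tendsto (fun N : ℕ => S - s N + 1 / ((N : ℝ) + 1)) atTop (𝓝 0) := by
    simpa [S] using ((tendsto_atTop_ciSup hs_mono hs_bdd).const_sub S).add
      tendsto_one_div_add_atTop_nhds_zero_nat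
  refine ⟨g, hgA, fun η hη => ?_⟩
  obtain ⟨N, hN⟩ := (herr.eventually_lt_const hη).exists
  refine ⟨N, fun n hn x hx => ?_⟩
  have hinv : 1 / ((n : ℝ) + 1) ≤ 1 / ((N : ℝ) + 1) := Nat.one_div_le_one_div hn
  linarith [hgJ n, hs_le N x hx]

section L0plus

variable {Ω : Type*} [MeasurableSpace Ω] {μ : Measure Ω}

theorem BoundedInProbability.mono {C D : Set (Ω → ℝ)} (hCD : C ⊆ D)
    (hD : BoundedInProbability μ D) : BoundedInProbability μ C :=
  tendsto_of_tendsto_of_tendsto_of_le_of_le tendsto_const_nhds hD (fun _ => bot_le)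
    fun _ => biSup_mono fun _ hf => hCD hf

theorem BoundedInProbability.exists_measure_le {C : Set (Ω → ℝ)}
    (hC : BoundedInProbability μ C) {θ : ℝ≥0∞} (hθ : 0 < θ) :
    ∃ M : ℝ, ∀ f ∈ C, μ {ω | M ≤ |f ω|} ≤ θ := by
  obtain ⟨M, hM⟩ := (hC.eventually_lt_const hθ).exists
  exact ⟨M, fun f hf =>
    (le_iSup₂ (f := fun f (_ : f ∈ C) => μ {ω | M ≤ |f ω|}) f hf).trans hM.le⟩

theorem norm_exp_neg_le_one_of_mem_L0plus {h : Ω → ℝ} (hh : h ∈ L0plus μ) :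
    ∀ᵐ ω ∂μ, ‖exp (-h ω)‖ ≤ 1 := by
  filter_upwards [hh.2] with ω hω
  rw [Real.norm_of_nonneg (exp_pos _).le]
  exact exp_le_one_iff.2 (neg_nonpos.2 hω)

variable [IsFiniteMeasure μ]

theorem integrable_exp_neg_of_mem_L0plus {h : Ω → ℝ} (hh : h ∈ L0plus μ) :
    Integrable (fun ω => exp (-h ω)) μ :=
  .of_bound hh.1.neg.exp.aestronglyMeasurable 1 (norm_exp_neg_le_one_of_mem_L0plus hh)

theorem abs_integral_exp_neg_le_of_mem_L0plus {h : Ω → ℝ} (hh : h ∈ L0plus μ) :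
    |∫ ω, exp (-h ω) ∂μ| ≤ μ.real univ := by
  simpa using norm_integral_le_of_norm_le_const (norm_exp_neg_le_one_of_mem_L0plus hh)

theorem integrable_sq_exp_neg_half_sub {h₁ h₂ : Ω → ℝ} (hh₁ : h₁ ∈ L0plus μ)
    (hh₂ : h₂ ∈ L0plus μ) :
    Integrable (fun ω => (exp (-(h₁ ω / 2)) - exp (-(h₂ ω / 2))) ^ 2) μ := by
  have := hh₁.1
  have := hh₂.1
  refine .of_bound (by fun_prop) 1 ?_
  filter_upwards [hh₁.2, hh₂.2] with ω h₁_nonneg h₂_nonneg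
  have : exp (-(h₁ ω / 2)) ≤ 1 := exp_le_one_iff.2 (by linarith)
  have : exp (-(h₂ ω / 2)) ≤ 1 := exp_le_one_iff.2 (by linarith)
  rw [Real.norm_of_nonneg (sq_nonneg _)]
  nlinarith [exp_pos (-(h₁ ω / 2)), exp_pos (-(h₂ ω / 2))]

theorem integral_sq_exp_neg_half_sub {h₁ h₂ : Ω → ℝ} (hh₁ : h₁ ∈ L0plus μ)
    (hh₂ : h₂ ∈ L0plus μ) (hmid : midpoint ℝ h₁ h₂ ∈ L0plus μ) :
    ∫ ω, (exp (-(h₁ ω / 2)) - exp (-(h₂ ω / 2))) ^ 2 ∂μ =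
      ∫ ω, exp (-h₁ ω) ∂μ + ∫ ω, exp (-h₂ ω) ∂μ -
        2 * ∫ ω, exp (-midpoint ℝ h₁ h₂ ω) ∂μ := by
  have hpt : ∀ ω, (exp (-(h₁ ω / 2)) - exp (-(h₂ ω / 2))) ^ 2 =
      exp (-h₁ ω) + exp (-h₂ ω) - 2 * exp (-midpoint ℝ h₁ h₂ ω) := fun ω =>
    sq_exp_neg_half_sub_exp_neg_half (congrFun (midpoint_add_self ℝ h₁ h₂) ω)
  have i₁ := integrable_exp_neg_of_mem_L0plus hh₁
  have i₂ := integrable_exp_neg_of_mem_L0plus hh₂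
  simp_rw [hpt]
  rw [integral_sub (f := fun ω => exp (-h₁ ω) + exp (-h₂ ω)) (i₁.add i₂)
    ((integrable_exp_neg_of_mem_L0plus hmid).const_mul 2), integral_add i₁ i₂,
    integral_const_mul]

theorem cauchyInMeasure_of_integral_sq_exp_neg_half_sub_le {g : ℕ → Ω → ℝ}
    (hg : ∀ n, g n ∈ L0plus μ) (hbdd : BoundedInProbability μ (range g))
    (hdefect : ∀ η > 0, ∃ N, ∀ n ≥ N, ∀ k ≥ N,
      ∫ ω, (exp (-(g n ω / 2)) - exp (-(g k ω / 2))) ^ 2 ∂μ ≤ η) :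
    CauchyInMeasure μ g := by
  intro ε hε θ hθ
  have hθ3 : 0 < θ / 3 := ENNReal.div_pos hθ.ne' (by norm_num)
  obtain ⟨M, hM⟩ := hbdd.exists_measure_le hθ3
  obtain ⟨r, -, hr0, hr⟩ := ENNReal.lt_iff_exists_real_btwn.1 hθ3
  set c := exp (-M) * (1 - exp (-(ε / 2))) ^ 2
  have hc : 0 < c := by
    have := sub_pos.2 (exp_lt_one_iff.2 (by linarith : -(ε / 2) < 0))
    positivity
  obtain ⟨N, hN⟩ := hdefect (c * r) (mul_pos hc (ENNReal.ofReal_pos.1 hr0))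
  refine ⟨N, fun n hn k hk => ?_⟩
  set F := fun ω => (exp (-(g n ω / 2)) - exp (-(g k ω / 2))) ^ 2
  have hsplit : {ω | ε ≤ dist (g n ω) (g k ω)} ⊆
      {ω | c ≤ F ω} ∪ {ω | M ≤ |g n ω|} ∪ {ω | M ≤ |g k ω|} := by
    intro ω hω
    by_contra hout
    simp only [mem_union, mem_ofPred_eq, not_or, not_le] at hout
    obtain ⟨⟨hF, hgn⟩, hgk⟩ := hout
    exact hF.not_ge (exp_neg_mul_sq_le_sq_exp_neg_half_sub (abs_lt.1 hgn).2.le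
      (abs_lt.1 hgk).2.le hε.le hω)
  have hmarkov : μ {ω | c ≤ F ω} ≤ θ / 3 := by
    have hreal : μ.real {ω | c ≤ F ω} ≤ r := le_of_mul_le_mul_left
      ((mul_meas_ge_le_integral_of_nonneg (ae_of_all _ fun ω => sq_nonneg _)
        (integrable_sq_exp_neg_half_sub (hg n) (hg k)) c).trans
        (hN n hn k hk)) hc
    rw [← ofReal_measureReal]
    exact (ENNReal.ofReal_le_ofReal hreal).trans hr.le
  calc μ {ω | ε ≤ dist (g n ω) (g k ω)}
      ≤ μ {ω | c ≤ F ω} + μ {ω | M ≤ |g n ω|} + μ {ω | M ≤ |g k ω|} :=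
        (measure_mono hsplit).trans ((measure_union_le _ _).trans
          (add_le_add_left (measure_union_le _ _) _))
    _ ≤ θ / 3 + θ / 3 + θ / 3 := by
        gcongr
        exacts [hM _ ⟨n, rfl⟩, hM _ ⟨k, rfl⟩]
    _ = θ := ENNReal.add_thirds θ

theorem iInter_nonempty_of_antitone_of_boundedInProbability {A : ℕ → Set (Ω → ℝ)}
    (hA : Antitone A) (hne : ∀ n, (A n).Nonempty) (hconv : ∀ n, Convex ℝ (A n))
    (hcl : ∀ n, ClosedInMeasure μ (A n)) (hL0 : A 0 ⊆ L0plus μ)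
    (hbdd : BoundedInProbability μ (A 0)) :
    (⋂ n, A n).Nonempty := by
  have hAL0 : ∀ n, A n ⊆ L0plus μ := fun n => (hA (Nat.zero_le n)).trans hL0
  obtain ⟨g, hgA, hgmin⟩ := exists_uniformly_minimizing_seq_of_antitone hA hne
    (J := fun h => ∫ ω, exp (-h ω) ∂μ)
    ⟨μ.real univ, fun h hh => abs_integral_exp_neg_le_of_mem_L0plus (hL0 hh)⟩
  have hg : ∀ n, g n ∈ L0plus μ := fun n => hAL0 n (hgA n)
  have hdefect : ∀ η > 0, ∃ N, ∀ n ≥ N, ∀ k ≥ N,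
      ∫ ω, (exp (-(g n ω / 2)) - exp (-(g k ω / 2))) ^ 2 ∂μ ≤ η := by
    intro η hη
    obtain ⟨N, hN⟩ := hgmin (η / 2) (half_pos hη)
    refine ⟨N, fun n hn k hk => ?_⟩
    have hmid := (hconv N).midpoint_mem (hA hn (hgA n)) (hA hk (hgA k))
    rw [integral_sq_exp_neg_half_sub (hg n) (hg k) (hAL0 N hmid)]
    linarith [hN n hn _ hmid, hN k hk _ hmid]
  have hcauchy := cauchyInMeasure_of_integral_sq_exp_neg_half_sub_le hg
    (hbdd.mono (range_subset_iff.2 fun n => hA (Nat.zero_le n) (hgA n))) hdefect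
  obtain ⟨φ, hφ, f, -, hlim⟩ :=
    hcauchy.exists_subseq_tendsto_ae fun n => (hg n).1.aemeasurable
  refine ⟨f, mem_iInter.2 fun n => hcl n (fun j => g (φ (j + n))) f
    (fun j => hA ((Nat.le_add_left n j).trans hφ.le_apply) (hgA _)) ?_⟩
  exact tendstoInMeasure_of_tendsto_ae (fun j => (hg _).1.aestronglyMeasurable)
    (hlim.mono fun ω hω => hω.comp (tendsto_add_atTop_nat n))

end L0plus

theorem exists_antitone_levels_of_bddBelow {X : Type*} {S : Set X} {G : X → EReal}
    {c l₀ : ℝ} (hc : ∀ x ∈ S, (c : EReal) ≤ G x) (hl₀ : ∃ x ∈ S, G x ≤ l₀) :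
    ∃ lev : ℕ → ℝ, Antitone lev ∧ lev 0 ≤ l₀ ∧ (∀ n, ∃ x ∈ S, G x ≤ lev n) ∧
      ∀ x, (∀ n, G x ≤ lev n) → ∀ y ∈ S, G x ≤ G y := by
  obtain ⟨x₀, hx₀S, hx₀⟩ := hl₀
  set m := sInf (G '' S)
  have hml₀ : m ≤ l₀ := (sInf_le (mem_image_of_mem G hx₀S)).trans hx₀
  have hcm : (c : EReal) ≤ m := le_sInf (by rintro _ ⟨x, hx, rfl⟩; exact hc x hx)
  have hm : (m.toReal : EReal) = m :=
    EReal.coe_toReal (hml₀.trans_lt (EReal.coe_lt_top _)).ne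
      ((EReal.bot_lt_coe c).trans_le hcm).ne'
  refine ⟨fun n => min l₀ (m.toReal + 1 / (n + 1)),
    fun n k hnk => min_le_min le_rfl (add_le_add_right (Nat.one_div_le_one_div hnk) _),
    min_le_left _ _, fun n => ?_, fun x hx y hy => ?_⟩
  · by_cases hcase : l₀ ≤ m.toReal + 1 / (n + 1)
    · exact ⟨x₀, hx₀S, by dsimp only; rwa [min_eq_left hcase]⟩
    · have hlt : m < ((m.toReal + 1 / (n + 1) : ℝ) : EReal) := by
        rw [← hm]
        exact EReal.coe_lt_coe_iff.2 (lt_add_of_pos_right _ Nat.one_div_pos_of_nat)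
      obtain ⟨_, ⟨x, hxS, rfl⟩, hx⟩ := sInf_lt_iff.1 hlt
      exact ⟨x, hxS, by dsimp only; rw [min_eq_right (not_le.1 hcase).le]; exact hx.le⟩
  · have hlim : Tendsto (fun n : ℕ => ((m.toReal + 1 / ((n : ℝ) + 1) : ℝ) : EReal)) atTop
        (𝓝 m) := by
      rw [← hm]
      refine (continuous_coe_real_ereal.tendsto _).comp ?_
      simpa using tendsto_one_div_add_atTop_nhds_zero_nat.const_add m.toReal
    have hxm : G x ≤ m :=
      ge_of_tendsto' hlim fun n => (hx n).trans (EReal.coe_le_coe_iff.2 (min_le_right _ _))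
    exact hxm.trans (sInf_le ⟨y, hy, rfl⟩)

theorem attains_inf_on_L0plus_general
    {Ω : Type*} [MeasurableSpace Ω] (μ : Measure Ω) [IsProbabilityMeasure μ]
    (G : (Ω → ℝ) → EReal)
    (hbdd : ∃ c : ℝ, ∀ f ∈ L0plus μ, (c : EReal) ≤ G f)
    (hconv : ∀ l : ℝ, Convex ℝ {f ∈ L0plus μ | G f ≤ (l : EReal)})
    (hcl : ∀ l : ℝ, ClosedInMeasure μ {f ∈ L0plus μ | G f ≤ (l : EReal)})
    (hcoer : ∃ l₀ : ℝ, {f ∈ L0plus μ | G f ≤ (l₀ : EReal)}.Nonempty ∧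
      BoundedInProbability μ {f ∈ L0plus μ | G f ≤ (l₀ : EReal)}) :
    ∃ f₀ ∈ L0plus μ, ∀ f ∈ L0plus μ, G f₀ ≤ G f := by
  obtain ⟨c, hc⟩ := hbdd
  obtain ⟨l₀, hne, hbip⟩ := hcoer
  obtain ⟨lev, hanti, hlev₀, hlev_ne, hmin⟩ := exists_antitone_levels_of_bddBelow hc hne
  have hsub : {f ∈ L0plus μ | G f ≤ lev 0} ⊆ {f ∈ L0plus μ | G f ≤ l₀} :=
    fun f hf => ⟨hf.1, hf.2.trans (EReal.coe_le_coe_iff.2 hlev₀)⟩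
  obtain ⟨f₀, hf₀⟩ := iInter_nonempty_of_antitone_of_boundedInProbability
    (A := fun n => {f ∈ L0plus μ | G f ≤ lev n})
    (fun n k hnk f hf => ⟨hf.1, hf.2.trans (EReal.coe_le_coe_iff.2 (hanti hnk))⟩)
    hlev_ne (fun n => hconv _) (fun n => hcl _) (hsub.trans (sep_subset _ _)) (hbip.mono hsub)
  have hf₀ := mem_iInter.1 hf₀
  exact ⟨f₀, (hf₀ 0).1, hmin f₀ fun n => (hf₀ n).2⟩

/-- Let `G : L0+ → (-∞,∞]` be bounded from below, with all real
lower-contour sets convex and closed in probability, and with some nonempty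
lower-contour set that is bounded in probability. Then `G` attains its infimum
on `L0+`. -/
theorem attains_inf_on_L0plus
    {Ω : Type*} [MeasurableSpace Ω] (μ : Measure Ω) [IsProbabilityMeasure μ]
    [μ.IsComplete]
    (G : (Ω → ℝ) → EReal)
    (hbdd : ∃ c : ℝ, ∀ f ∈ L0plus μ, (c : EReal) ≤ G f)
    (hconv : ∀ l : ℝ, Convex ℝ {f ∈ L0plus μ | G f ≤ (l : EReal)})
    (hcl : ∀ l : ℝ, ClosedInMeasure μ {f ∈ L0plus μ | G f ≤ (l : EReal)})
    (hcoer : ∃ l₀ : ℝ, {f ∈ L0plus μ | G f ≤ (l₀ : EReal)}.Nonempty ∧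
      BoundedInProbability μ {f ∈ L0plus μ | G f ≤ (l₀ : EReal)}) :
    ∃ f₀ ∈ L0plus μ, ∀ f ∈ L0plus μ, G f₀ ≤ G f :=
  attains_inf_on_L0plus_general μ G hbdd hconv hcl hcoer
end

section
/- Let X be a topological vector space, let B be a nonempty subset of X, and let {F(x)}_{x∈B} be a family of subsets of X with the KKM property. Then for any finite set {x₁,…,xₙ} ⊆ B, the intersection ⋂_{i=1}^n F(x_i) is nonempty. -/
/-- A family `{F x}_{x ∈ B}` of subsets of `X`, indexed by a nonempty `B ⊆ X`, has the
*Knaster–Kuratowski–Mazurkiewicz (KKM) property* if each `F x` (for `x ∈ B`) is closed,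
and the convex hull of every finite subset `{x₁, …, xₙ} ⊆ B` is contained in
`⋃ i, F xᵢ`. -/
def KKMFamily {X : Type*} [AddCommGroup X] [Module ℝ X] [TopologicalSpace X]
    (B : Set X) (F : X → Set X) : Prop :=
  (∀ x ∈ B, IsClosed (F x)) ∧
    ∀ s : Finset X, ↑s ⊆ B → convexHull ℝ (s : Set X) ⊆ ⋃ x ∈ s, F x

/-!
The proof goes through Sperner's lemma. Kuhn's triangulation subdivides the dilated simplex
`{p ∈ ℤⁿ | k ≥ p 0 ≥ ⋯ ≥ p (n - 1) ≥ 0}` into the cells with vertices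
`q, q + e (σ 0), …, q + e (σ 0) + ⋯ + e (σ (n - 1))`, `σ` a permutation. Label each lattice point
by an index whose barycentric coordinate is positive. Counted modulo two, the facets carrying the
labels `0, …, n - 1` (the doors) are as many as the fully labelled cells; interior doors pair up
through adjacent cells, and the doors on the bottom face are the fully labelled cells of the
triangulation one dimension down. By induction, a fully labelled cell exists.

Given closed sets `G i` such that each point `y` of the standard simplex lies in some `G i` with
`y i ≠ 0`, label each lattice point by such an `i` for its barycentric point. If the `G i` had no
common point, their complements would cover the simplex with a Lebesgue number `δ`; but once
`2 / k < δ`, a fully labelled cell has diameter below `δ` and meets every `G i`. In a topological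
vector space, pull the sets back along `t ↦ ∑ i, t i • x i`.
-/

open Finset Function

namespace Finset

theorem even_card_of_involution {α : Type*} {s : Finset α} (g : α → α)
    (hmaps : ∀ a ∈ s, g a ∈ s) (hinv : ∀ a ∈ s, g (g a) = a) (hne : ∀ a ∈ s, g a ≠ a) :
    Even #s := by
  classical
  let f : Function.End s := fun a => ⟨g a, hmaps a a.2⟩
  have hf : f ^ 2 ^ 1 = 1 := by
    funext a
    exact Subtype.ext (hinv a a.2)
  have hfix : Fintype.card (fixedPoints f) = 0 :=
    Fintype.card_eq_zero_iff.2 ⟨fun ⟨a, ha⟩ => hne a a.2 (congrArg Subtype.val ha)⟩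
  have := Equiv.Perm.card_fixedPoints_modEq (p := 2) hf
  rw [hfix, Fintype.card_coe] at this
  exact Nat.even_iff.2 this

end Finset

section IsDoor

variable {α β : Type*} [Fintype α] [DecidableEq α] [Fintype β] [DecidableEq β]

/-- A *door* of the door-to-door argument: deleting `j` leaves exactly the values other than `b`. -/
def IsDoor (f : α → β) (b : β) (j : α) : Prop := (univ.erase j).image f = univ.erase b

instance (f : α → β) (b : β) : DecidablePred (IsDoor f b) := fun _ => by
  unfold IsDoor; infer_instance

variable {f : α → β} {b : β} {j : α}

theorem isDoor_iff_of_bijective (hf : Bijective f) : IsDoor f b j ↔ f j = b := by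
  rw [IsDoor, image_erase hf.1, image_univ_of_surjective hf.2, erase_inj _ (mem_univ _)]

theorem IsDoor.injOn (h : IsDoor f b j) (hcard : Fintype.card α = Fintype.card β) :
    Set.InjOn f (univ.erase j : Finset α) := by
  apply injOn_of_card_image_eq
  rw [h, card_erase_of_mem (mem_univ _), card_erase_of_mem (mem_univ _), card_univ, card_univ,
    hcard]

theorem IsDoor.image_univ (h : IsDoor f b j) : univ.image f = insert (f j) (univ.erase b) := by
  rw [← h, ← image_insert, insert_erase (mem_univ _)]

theorem card_filter_isDoor_of_bijective (hf : Bijective f) : #{j | IsDoor f b j} = 1 := by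
  obtain ⟨j₀, hj₀⟩ := hf.2 b
  rw [card_eq_one]
  refine ⟨j₀, ?_⟩
  ext j
  simp only [mem_filter, mem_univ, true_and, mem_singleton, isDoor_iff_of_bijective hf]
  exact ⟨fun h => hf.1 (h.trans hj₀.symm), fun h => h ▸ hj₀⟩

theorem even_card_filter_isDoor (hf : ¬ Surjective f)
    (hcard : Fintype.card α = Fintype.card β) : Even #{j | IsDoor f b j} := by
  by_cases hdoor : ∃ j, IsDoor f b j
  swap
  · rw [filter_false_of_mem (fun j _ => not_exists.1 hdoor j), card_empty]
    exact Even.zero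
  obtain ⟨j, hj⟩ := hdoor
  have hjb : f j ≠ b := fun hjb => hf fun y => by
    simpa using (hj.image_univ.trans (by rw [hjb, insert_erase (mem_univ _)])).ge (mem_univ y)
  have himage : univ.image f = univ.erase b := by
    rw [hj.image_univ, insert_eq_of_mem (mem_erase.2 ⟨hjb, mem_univ _⟩)]
  obtain ⟨j₁, j₂, heq, hne⟩ : ∃ j₁ j₂, f j₁ = f j₂ ∧ j₁ ≠ j₂ := by
    refine Function.not_injective_iff.1 fun hinj => hf ?_
    exact ((Fintype.bijective_iff_injective_and_card f).2 ⟨hinj, hcard⟩).2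
  have hmate : ∀ {i i'}, f i = f i' → i ≠ i' → IsDoor f b i := by
    intro i i' hii' hne
    rw [IsDoor, ← himage]
    conv_rhs => rw [← insert_erase (mem_univ i), image_insert]
    exact (insert_eq_of_mem (mem_image.2 ⟨i', mem_erase.2 ⟨hne.symm, mem_univ _⟩, hii'.symm⟩)).symm
  have : ({j | IsDoor f b j} : Finset α) = {j₁, j₂} := by
    ext i
    simp only [mem_filter, mem_univ, true_and, mem_insert, mem_singleton]
    refine ⟨fun hi => ?_, ?_⟩
    · by_contra! h
      exact hne (hi.injOn hcard (by simp [h.1.symm]) (by simp [h.2.symm]) heq)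
    · rintro (rfl | rfl)
      exacts [hmate heq hne, hmate heq.symm hne.symm]
  rw [this, card_pair hne]
  exact even_two

end IsDoor

namespace Kuhn

open Equiv

variable {n : ℕ}

/-- The coordinates of `p` padded to `k, p 0, …, p (n - 1), 0, 0, …`. The dilated simplex
`{k ≥ p 0 ≥ ⋯ ≥ p (n - 1) ≥ 0}` is where this sequence is antitone, and its consecutive
differences `bary k p 0, …, bary k p n` are `k` times the barycentric coordinates of `p`. -/
def paddedCoord (k : ℕ) (p : Fin n → ℤ) (i : ℕ) : ℤ :=
  if h₀ : i = 0 then k else if hn : i ≤ n then p ⟨i - 1, by omega⟩ else 0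

def bary (k : ℕ) (p : Fin n → ℤ) (i : ℕ) : ℤ := paddedCoord k p i - paddedCoord k p (i + 1)

def InSimplex (k : ℕ) (p : Fin n → ℤ) : Prop := ∀ i, 0 ≤ bary k p i

variable {k : ℕ} {p : Fin n → ℤ}

@[simp]
lemma paddedCoord_zero : paddedCoord k p 0 = k := rfl

lemma paddedCoord_of_lt {i : ℕ} (h : n < i) : paddedCoord k p i = 0 := by
  rw [paddedCoord, dif_neg (by omega), dif_neg (by omega)]

lemma paddedCoord_of_le {i : ℕ} (h₁ : 1 ≤ i) (h₂ : i ≤ n) :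
    paddedCoord k p i = p ⟨i - 1, by omega⟩ := by
  rw [paddedCoord, dif_neg (by omega), dif_pos h₂]

@[simp]
lemma paddedCoord_succ (x : Fin n) : paddedCoord k p (x + 1) = p x := by
  rw [paddedCoord_of_le (by omega) x.isLt]
  rfl

lemma bary_of_lt {i : ℕ} (h : n < i) : bary k p i = 0 := by
  rw [bary, paddedCoord_of_lt h, paddedCoord_of_lt (by omega), sub_zero]

lemma bary_eq_sub {i : ℕ} (h₁ : 1 ≤ i) (h₂ : i < n) :
    bary k p i = p ⟨i - 1, by omega⟩ - p ⟨i, h₂⟩ := by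
  rw [bary, paddedCoord_of_le h₁ h₂.le, paddedCoord_of_le (by omega) h₂]
  rfl

lemma bary_zero (hn : 0 < n) : bary k p 0 = k - p ⟨0, hn⟩ := by
  rw [bary, paddedCoord_zero, paddedCoord_of_le le_rfl hn]

lemma bary_self (hn : 0 < n) : bary k p n = p ⟨n - 1, by omega⟩ := by
  rw [bary, paddedCoord_of_le hn le_rfl, paddedCoord_of_lt (by omega), sub_zero]

lemma inSimplex_iff : InSimplex k p ↔ ∀ i ≤ n, 0 ≤ bary k p i := by
  refine ⟨fun h i _ => h i, fun h i => ?_⟩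
  rcases le_or_gt i n with hi | hi
  exacts [h i hi, (bary_of_lt hi).ge]

instance : Decidable (InSimplex k p) := decidable_of_iff _ inSimplex_iff.symm

lemma InSimplex.paddedCoord_antitone (hp : InSimplex k p) : Antitone (paddedCoord k p) :=
  antitone_nat_of_succ_le fun i => sub_nonneg.1 (hp i)

lemma InSimplex.nonneg (hp : InSimplex k p) (x : Fin n) : 0 ≤ p x := by
  simpa [paddedCoord_of_lt] using hp.paddedCoord_antitone (show x.val + 1 ≤ n + 1 by omega)

lemma InSimplex.le (hp : InSimplex k p) (x : Fin n) : p x ≤ k := by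
  simpa using hp.paddedCoord_antitone (Nat.zero_le (x.val + 1))

lemma sum_bary (p : Fin n → ℤ) : ∑ i : Fin (n + 1), bary k p i = k := by
  rw [Fin.sum_univ_eq_sum_range (bary k p)]
  simp only [bary]
  rw [Finset.sum_range_sub', paddedCoord_zero,
    paddedCoord_of_lt (by omega), sub_zero]

lemma paddedCoord_add_single (p : Fin n → ℤ) (b : Fin n) (i : ℕ) :
    paddedCoord k (p + Pi.single b 1) i = paddedCoord k p i + if i = b.val + 1 then 1 else 0 := by
  rcases Nat.eq_zero_or_pos i with rfl | h₀
  · simp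
  rcases le_or_gt i n with hle | hgt
  · rw [paddedCoord_of_le h₀ hle, paddedCoord_of_le h₀ hle, Pi.add_apply, Pi.single_apply]
    congr 1
    simp only [Fin.ext_iff]
    split_ifs <;> omega
  · rw [paddedCoord_of_lt hgt, paddedCoord_of_lt hgt, if_neg (by omega), add_zero]

lemma bary_add_single (p : Fin n → ℤ) (b : Fin n) (i : ℕ) :
    bary k (p + Pi.single b 1) i
      = bary k p i + (if i = b.val + 1 then 1 else 0) - if i = b.val then 1 else 0 := by
  rw [bary, bary, paddedCoord_add_single, paddedCoord_add_single]
  split_ifs <;> omega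

lemma bary_sub_single (p : Fin n → ℤ) (b : Fin n) (i : ℕ) :
    bary k (p - Pi.single b 1) i
      = bary k p i - (if i = b.val + 1 then 1 else 0) + if i = b.val then 1 else 0 := by
  have h := bary_add_single (k := k) (p - Pi.single b 1) b i
  rw [sub_add_cancel] at h
  omega

lemma InSimplex.bary_eq_zero_of_add_single (hp : InSimplex k p) {b : Fin n}
    (h : ¬ InSimplex k (p + Pi.single b 1)) : bary k p b = 0 := by
  obtain ⟨i, hi⟩ := not_forall.1 h
  rw [bary_add_single] at hi
  have := hp i
  by_cases hib : i = b.val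
  · subst hib
    split_ifs at hi <;> omega
  · split_ifs at hi <;> omega

lemma InSimplex.bary_succ_eq_zero_of_sub_single (hp : InSimplex k p) {b : Fin n}
    (h : ¬ InSimplex k (p - Pi.single b 1)) : bary k p (b + 1) = 0 := by
  obtain ⟨i, hi⟩ := not_forall.1 h
  rw [bary_sub_single] at hi
  have := hp i
  by_cases hib : i = b.val + 1
  · subst hib
    split_ifs at hi <;> omega
  · split_ifs at hi <;> omega

lemma InSimplex.succ_eq_of_not_inSimplex (hp : InSimplex k p) {a b : Fin n} (hab : a ≠ b)
    (h₂ : InSimplex k (p + Pi.single a 1 + Pi.single b 1))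
    (hb : ¬ InSimplex k (p + Pi.single b 1)) : b.val = a.val + 1 ∧ p a = p b := by
  have h₀ := hp.bary_eq_zero_of_add_single hb
  have h₃ := h₂ b
  rw [bary_add_single, bary_add_single] at h₃
  have hv : a.val ≠ b.val := Fin.val_ne_of_ne hab
  have hadj : b.val = a.val + 1 := by
    by_contra
    split_ifs at h₃ <;> omega
  rw [bary_eq_sub (by omega) b.isLt] at h₀
  have ha : (⟨b.val - 1, by omega⟩ : Fin n) = a := Fin.ext (by simp only; omega)
  rw [ha] at h₀
  exact ⟨hadj, sub_eq_zero.1 h₀⟩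

abbrev Cell (n : ℕ) := (Fin n → ℤ) × Perm (Fin n)

/-- Kuhn's simplex with base point `c.1` and step order `c.2`: its vertex `j` is
`c.1 + e (c.2 0) + ⋯ + e (c.2 (j - 1))`, and vertex `j` is vertex `n` for `j ≥ n`. -/
def vertex (c : Cell n) (j : ℕ) : Fin n → ℤ :=
  fun x => c.1 x + if (c.2⁻¹ x : ℕ) < j then 1 else 0

def IsCell (k : ℕ) (c : Cell n) : Prop := ∀ j, InSimplex k (vertex c j)

variable {c : Cell n}

@[simp]
lemma vertex_zero : vertex c 0 = c.1 := by
  funext x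
  simp [vertex]

lemma vertex_of_le {j : ℕ} (h : n ≤ j) : vertex c j = vertex c n := by
  funext x
  have := (c.2⁻¹ x).isLt
  simp only [vertex, if_pos (this.trans_le h), if_pos this]

@[simp]
lemma vertex_self_apply (x : Fin n) : vertex c n x = c.1 x + 1 := by
  simp [vertex]

lemma vertex_apply_perm (j : ℕ) (y : Fin n) :
    vertex c j (c.2 y) = c.1 (c.2 y) + if (y : ℕ) < j then 1 else 0 := by
  simp [vertex]

lemma vertex_succ {j : ℕ} (hj : j < n) :
    vertex c (j + 1) = vertex c j + Pi.single (c.2 ⟨j, hj⟩) 1 := by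
  funext x
  simp only [vertex, Pi.add_apply, Pi.single_apply, ← Perm.inv_eq_iff_eq, Fin.ext_iff]
  split_ifs <;> omega

lemma isCell_iff : IsCell k c ↔ ∀ j ≤ n, InSimplex k (vertex c j) := by
  refine ⟨fun h j _ => h j, fun h j => ?_⟩
  rcases le_or_gt j n with hj | hj
  · exact h j hj
  · rw [vertex_of_le hj.le]
    exact h n le_rfl

instance : Decidable (IsCell k c) := decidable_of_iff _ isCell_iff.symm

lemma IsCell.vertex_le_of_succ_eq (hc : IsCell k c) {a b : Fin n} (hab : a.val + 1 = b.val)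
    (i : ℕ) : vertex c i b ≤ vertex c i a := by
  have h := hc i b
  rw [bary_eq_sub (by omega) b.isLt] at h
  have ha : (⟨b.val - 1, by omega⟩ : Fin n) = a := Fin.ext (by simp only; omega)
  rw [ha] at h
  exact sub_nonneg.1 h

variable (n k) in
noncomputable def cells : Finset (Cell n) :=
  (Finset.Icc (0 : Fin n → ℤ) (fun _ => (k : ℤ)) ×ˢ univ).filter (IsCell k)

lemma mem_cells : c ∈ cells n k ↔ IsCell k c := by
  simp only [cells, mem_filter, mem_product, mem_univ, and_true, and_iff_right_iff_imp]
  intro hc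
  have h₀ := hc 0
  rw [vertex_zero] at h₀
  exact Finset.mem_Icc.2 ⟨h₀.nonneg, h₀.le⟩

def swapSteps (c : Cell n) (a b : Fin n) : Cell n := (c.1, c.2 * swap a b)

lemma vertex_swapSteps_of_ne {j : ℕ} (hj₀ : 0 < j) (hjn : j < n) {i : ℕ} (hij : i ≠ j) :
    vertex (swapSteps c ⟨j - 1, by omega⟩ ⟨j, hjn⟩) i = vertex c i := by
  funext x
  simp only [vertex, swapSteps, mul_inv_rev, swap_inv, Perm.mul_apply, swap_apply_def]
  split_ifs <;> simp_all [Fin.ext_iff] <;> omega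

lemma vertex_swapSteps_self {j : ℕ} (hj₀ : 0 < j) (hjn : j < n) :
    vertex (swapSteps c ⟨j - 1, by omega⟩ ⟨j, hjn⟩) j
      = vertex c (j - 1) + Pi.single (c.2 ⟨j, hjn⟩) 1 := by
  have h := vertex_succ (c := swapSteps c ⟨j - 1, by omega⟩ ⟨j, hjn⟩) (j := j - 1) (by omega)
  rw [Nat.sub_add_cancel hj₀] at h
  rw [h, vertex_swapSteps_of_ne hj₀ hjn (by omega)]
  simp [swapSteps]

lemma IsCell.swapSteps_or (hc : IsCell k c) {j : ℕ} (hj₀ : 0 < j) (hjn : j < n) :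
    IsCell k (swapSteps c ⟨j - 1, by omega⟩ ⟨j, hjn⟩) ∨
      ∃ b, 0 < b ∧ b < n ∧ ∀ i ≠ j, bary k (vertex c i) b = 0 := by
  set a : Fin n := ⟨j - 1, by omega⟩
  set b : Fin n := ⟨j, hjn⟩
  by_cases hin : InSimplex k (vertex (swapSteps c a b) j)
  · left
    intro i
    rcases eq_or_ne i j with rfl | hij
    · exact hin
    · rw [vertex_swapSteps_of_ne hj₀ hjn hij]
      exact hc i
  right
  have hout : ¬ InSimplex k (vertex c (j - 1) + Pi.single (c.2 b) 1) := by
    rwa [← vertex_swapSteps_self hj₀ hjn]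
  have htwo : vertex c (j - 1) + Pi.single (c.2 a) 1 + Pi.single (c.2 b) 1 = vertex c (j + 1) := by
    have h := vertex_succ (c := c) (j := j - 1) (by omega)
    rw [Nat.sub_add_cancel hj₀] at h
    rw [vertex_succ hjn, h]
  have hab : c.2 a ≠ c.2 b := c.2.injective.ne (by simp [a, b, Fin.ext_iff]; omega)
  obtain ⟨hadj, heq⟩ :=
    (hc (j - 1)).succ_eq_of_not_inSimplex hab (htwo ▸ hc (j + 1)) hout
  refine ⟨c.2 b, by omega, (c.2 b).isLt, fun i hi => ?_⟩
  rw [bary_eq_sub (by omega) (c.2 b).isLt]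
  have ha : (⟨(c.2 b).val - 1, by omega⟩ : Fin n) = c.2 a := Fin.ext (by simp only; omega)
  rw [ha]
  rw [vertex_apply_perm, vertex_apply_perm] at heq
  show vertex c i (c.2 a) - vertex c i (c.2 b) = 0
  rw [vertex_apply_perm, vertex_apply_perm]
  simp only [a, b] at heq ⊢
  split_ifs at heq ⊢ <;> omega

section shift

variable {m : ℕ} {c : Cell (m + 1)}

def shift (c : Cell (m + 1)) : Cell (m + 1) :=
  (c.1 + Pi.single (c.2 0) 1, c.2 * finRotate (m + 1))

def unshift (c : Cell (m + 1)) : Cell (m + 1) :=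
  (c.1 - Pi.single (c.2 (Fin.last m)) 1, c.2 * (finRotate (m + 1))⁻¹)

lemma shift_unshift (c : Cell (m + 1)) : shift (unshift c) = c := by
  have h : (c.2 * (finRotate (m + 1))⁻¹) 0 = c.2 (Fin.last m) := by
    rw [Perm.mul_apply, Perm.inv_eq_iff_eq.2 finRotate_last.symm]
  refine Prod.ext ?_ (by simp [shift, unshift])
  simp only [shift, unshift, h, sub_add_cancel]

lemma unshift_shift (c : Cell (m + 1)) : unshift (shift c) = c := by
  have h : (c.2 * finRotate (m + 1)) (Fin.last m) = c.2 0 := by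
    rw [Perm.mul_apply, finRotate_last]
  refine Prod.ext ?_ (by simp [shift, unshift])
  simp only [shift, unshift, h, add_sub_cancel_right]

lemma val_finRotate_inv (y : Fin (m + 1)) :
    ((finRotate (m + 1))⁻¹ y : ℕ) = if (y : ℕ) = 0 then m else (y : ℕ) - 1 := by
  split_ifs with hy
  · rw [show y = 0 from Fin.ext hy, Perm.inv_eq_iff_eq.2 finRotate_last.symm, Fin.val_last]
  · exact coe_finRotate_symm_of_ne_zero (Fin.ne_of_val_ne hy)

lemma val_finRotate_inv_inv (y : Fin (m + 1)) :
    ((finRotate (m + 1))⁻¹⁻¹ y : ℕ) = if (y : ℕ) = m then 0 else (y : ℕ) + 1 := by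
  rw [inv_inv, coe_finRotate]
  simp [Fin.ext_iff]

lemma vertex_shift {i : ℕ} (hi : i ≤ m) : vertex (shift c) i = vertex c (i + 1) := by
  funext x
  have := (c.2⁻¹ x).isLt
  simp only [vertex, shift, mul_inv_rev, Perm.mul_apply, val_finRotate_inv, Pi.add_apply,
    Pi.single_apply, ← Perm.inv_eq_iff_eq, Fin.ext_iff, Fin.val_zero]
  split_ifs <;> omega

lemma vertex_shift_top : vertex (shift c) (m + 1) = vertex c (m + 1) + Pi.single (c.2 0) 1 := by
  funext x
  have := ((c.2 * finRotate (m + 1))⁻¹ x).isLt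
  have := (c.2⁻¹ x).isLt
  simp only [vertex, shift, Pi.add_apply]
  split_ifs
  omega

/-- Coordinates `a` and `c.2 0 = a + 1` agreeing at the top vertex would agree at the base point,
and then the first step would break their order. -/
lemma IsCell.val_perm_zero_eq_zero (hc : IsCell k c) (h : bary k (vertex c (m + 1)) (c.2 0) = 0) :
    (c.2 0 : ℕ) = 0 := by
  by_contra hne
  set a : Fin (m + 1) := ⟨(c.2 0 : ℕ) - 1, by omega⟩
  have hle := hc.vertex_le_of_succ_eq (a := a) (b := c.2 0) (by simp only [a]; omega) 1
  rw [bary_eq_sub (by omega) (c.2 0).isLt] at h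
  change vertex c (m + 1) a - vertex c (m + 1) (c.2 0) = 0 at h
  have ha : ¬ (c.2⁻¹ a : ℕ) < 1 := fun h => by
    rw [Nat.lt_one_iff, Fin.val_eq_zero_iff, Perm.inv_eq_iff_eq] at h
    simp only [a, Fin.ext_iff] at h
    omega
  simp only [vertex_self_apply] at h
  have h₁ : vertex c 1 a = c.1 a := by simp only [vertex, if_neg ha, add_zero]
  rw [h₁, vertex_apply_perm, Fin.val_zero, if_pos zero_lt_one] at hle
  omega

lemma IsCell.shift_or (hc : IsCell k c) :
    IsCell k (shift c) ∨ ∀ i, 1 ≤ i → bary k (vertex c i) 0 = 0 := by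
  by_cases hin : InSimplex k (vertex (shift c) (m + 1))
  · left
    refine isCell_iff.2 fun i hi => ?_
    rcases hi.lt_or_eq with hi | rfl
    · rw [vertex_shift (by omega)]
      exact hc _
    · exact hin
  right
  rw [vertex_shift_top] at hin
  have h₀ := (hc (m + 1)).bary_eq_zero_of_add_single hin
  have hfirst := hc.val_perm_zero_eq_zero h₀
  intro i hi
  rw [hfirst, bary_zero (by omega)] at h₀
  rw [bary_zero (by omega)]
  have hz : (⟨0, by omega⟩ : Fin (m + 1)) = c.2 0 := Fin.ext hfirst.symm
  rw [hz, vertex_apply_perm] at h₀ ⊢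
  simp only [Fin.val_zero] at h₀ ⊢
  split_ifs at h₀ ⊢ <;> omega

lemma vertex_unshift {i : ℕ} (h₁ : 1 ≤ i) (h₂ : i ≤ m + 1) :
    vertex (unshift c) i = vertex c (i - 1) := by
  funext x
  have := (c.2⁻¹ x).isLt
  simp only [vertex, unshift, mul_inv_rev, Perm.mul_apply, val_finRotate_inv_inv, Pi.sub_apply,
    Pi.single_apply, ← Perm.inv_eq_iff_eq, Fin.ext_iff, Fin.val_last]
  split_ifs <;> omega

lemma vertex_unshift_zero : vertex (unshift c) 0 = c.1 - Pi.single (c.2 (Fin.last m)) 1 := by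
  rw [vertex_zero]
  rfl

/-- Coordinates `g = c.2 (Fin.last m)` and `g + 1` agreeing at the base point would break their
order once `g + 1` has been raised and `g` not yet. -/
lemma IsCell.val_perm_last_eq (hc : IsCell k c)
    (h : bary k c.1 ((c.2 (Fin.last m) : ℕ) + 1) = 0) : (c.2 (Fin.last m) : ℕ) = m := by
  set g := c.2 (Fin.last m) with hg_def
  refine (Nat.lt_succ_iff.1 g.isLt).eq_or_lt.resolve_right fun hg => ?_
  set d : Fin (m + 1) := ⟨g + 1, by omega⟩
  rw [bary_eq_sub (by omega) (by omega)] at h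
  change c.1 g - c.1 d = 0 at h
  have hd : (c.2⁻¹ d : ℕ) < m := by
    refine lt_of_le_of_ne (Nat.lt_succ_iff.1 (c.2⁻¹ d).isLt) fun h => ?_
    have hdg : d = g := Perm.inv_eq_iff_eq.1 (Fin.ext h)
    exact absurd (congrArg Fin.val hdg) (by simp [d])
  have hle := hc.vertex_le_of_succ_eq (a := g) (b := d) rfl ((c.2⁻¹ d : ℕ) + 1)
  rw [vertex_apply_perm, Fin.val_last, if_neg (by omega)] at hle
  simp only [vertex, lt_add_one, if_true, ← hg_def] at hle
  omega

lemma IsCell.unshift_or (hc : IsCell k c) :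
    IsCell k (unshift c) ∨ ∀ i ≤ m, bary k (vertex c i) (m + 1) = 0 := by
  by_cases hin : InSimplex k (vertex (unshift c) 0)
  · left
    refine isCell_iff.2 fun i hi => ?_
    rcases Nat.eq_zero_or_pos i with rfl | hi₀
    · exact hin
    · rw [vertex_unshift hi₀ hi]
      exact hc _
  right
  rw [vertex_unshift_zero] at hin
  have h₀ := (vertex_zero (c := c) ▸ hc 0).bary_succ_eq_zero_of_sub_single hin
  have hlast := hc.val_perm_last_eq h₀
  intro i hi
  rw [hlast, bary_self (by omega)] at h₀
  rw [bary_self (by omega)]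
  have hg : (⟨m + 1 - 1, by omega⟩ : Fin (m + 1)) = c.2 (Fin.last m) :=
    Fin.ext (by simp only [hlast]; omega)
  rw [hg] at h₀ ⊢
  rw [vertex_apply_perm, Fin.val_last, if_neg (by omega), add_zero]
  exact h₀

end shift

def IsSpernerLabelling (k : ℕ) (ℓ : (Fin n → ℤ) → Fin (n + 1)) : Prop :=
  ∀ p, InSimplex k p → 0 < bary k p (ℓ p)

def labels (ℓ : (Fin n → ℤ) → Fin (n + 1)) (c : Cell n) : Fin (n + 1) → Fin (n + 1) :=
  fun j => ℓ (vertex c j)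

def facet (c : Cell n) (j : Fin (n + 1)) : Finset (Fin n → ℤ) :=
  (univ.erase j).image fun i : Fin (n + 1) => vertex c i

def IsBottom (k : ℕ) (c : Cell n) (j : Fin (n + 1)) : Prop :=
  ∀ i ≠ j, bary k (vertex c i) n = 0

instance (j : Fin (n + 1)) : Decidable (IsBottom k c j) := by
  unfold IsBottom; infer_instance

section doors

variable (n k) (ℓ : (Fin n → ℤ) → Fin (n + 1))

noncomputable def fullyLabelled : Finset (Cell n) :=
  (cells n k).filter fun c => Surjective (labels ℓ c)

noncomputable def doors : Finset (Cell n × Fin (n + 1)) :=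
  (cells n k ×ˢ univ).filter fun cj => IsDoor (labels ℓ cj.1) (Fin.last n) cj.2

noncomputable def interiorDoors : Finset (Cell n × Fin (n + 1)) :=
  (doors n k ℓ).filter fun cj => ¬ IsBottom k cj.1 cj.2

noncomputable def bottomDoors : Finset (Cell n × Fin (n + 1)) :=
  (doors n k ℓ).filter fun cj => IsBottom k cj.1 cj.2

end doors

variable {ℓ : (Fin n → ℤ) → Fin (n + 1)}

lemma mem_interiorDoors {cj : Cell n × Fin (n + 1)} : cj ∈ interiorDoors n k ℓ ↔
    IsCell k cj.1 ∧ IsDoor (labels ℓ cj.1) (Fin.last n) cj.2 ∧ ¬ IsBottom k cj.1 cj.2 := by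
  simp only [interiorDoors, doors, mem_filter, mem_product, mem_cells, mem_univ, and_true,
    and_assoc]

lemma mem_bottomDoors {cj : Cell n × Fin (n + 1)} : cj ∈ bottomDoors n k ℓ ↔
    IsCell k cj.1 ∧ IsDoor (labels ℓ cj.1) (Fin.last n) cj.2 ∧ IsBottom k cj.1 cj.2 := by
  simp only [bottomDoors, doors, mem_filter, mem_product, mem_cells, mem_univ, and_true,
    and_assoc]

lemma card_bottomDoors_add_card_interiorDoors :
    #(bottomDoors n k ℓ) + #(interiorDoors n k ℓ) = #(doors n k ℓ) :=
  card_filter_add_card_filter_not _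

/-- Each fully labelled cell has exactly one door, every other cell an even number. -/
lemma card_doors_mod_two : #(doors n k ℓ) % 2 = #(fullyLabelled n k ℓ) % 2 := by
  have hcell (c : Cell n) : #{j | IsDoor (labels ℓ c) (Fin.last n) j} % 2
      = if Surjective (labels ℓ c) then 1 else 0 := by
    by_cases hc : Surjective (labels ℓ c)
    · rw [card_filter_isDoor_of_bijective ⟨Finite.injective_iff_surjective.2 hc, hc⟩, if_pos hc]
    · rw [if_neg hc, Nat.even_iff.1 (even_card_filter_isDoor hc rfl)]
  rw [doors, card_filter, sum_product, fullyLabelled, card_filter, sum_nat_mod,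
    sum_nat_mod (cells n k)]
  congr 1
  refine sum_congr rfl fun c _ => ?_
  rw [← card_filter, hcell c]
  split_ifs <;> rfl

lemma facet_zero (c : Cell n) : facet c 0 = univ.image fun i : Fin n => vertex c (i + 1) := by
  rw [facet, ← compl_singleton, ← Fin.image_succ_univ, image_image]
  rfl

lemma facet_last (c : Cell n) : facet c (Fin.last n) = univ.image fun i : Fin n => vertex c i := by
  rw [facet, ← compl_singleton, ← Fin.image_castSucc, image_image]
  rfl

lemma isDoor_iff_facet {c : Cell n} {j : Fin (n + 1)} :
    IsDoor (labels ℓ c) (Fin.last n) j ↔ (facet c j).image ℓ = univ.erase (Fin.last n) := by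
  rw [IsDoor, facet, image_image]
  rfl

lemma isBottom_iff_facet {c : Cell n} {j : Fin (n + 1)} :
    IsBottom k c j ↔ ∀ p ∈ facet c j, bary k p n = 0 := by
  simp [IsBottom, facet]

/-- The label `b` occurs on every door, and a Sperner labelling never uses it where `bary b = 0`. -/
lemma IsSpernerLabelling.not_isDoor (hℓ : IsSpernerLabelling k ℓ) {c : Cell n} (hc : IsCell k c)
    {j : Fin (n + 1)} {b : ℕ} (hb : b < n)
    (hzero : ∀ i : Fin (n + 1), i ≠ j → bary k (vertex c i) b = 0) :
    ¬ IsDoor (labels ℓ c) (Fin.last n) j := by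
  intro hdoor
  have hmem : (⟨b, by omega⟩ : Fin (n + 1)) ∈ (univ.erase j).image (labels ℓ c) := by
    rw [hdoor]
    simp [Fin.ext_iff, hb.ne]
  obtain ⟨i, hi, hℓi⟩ := mem_image.1 hmem
  have := hℓ _ (hc i)
  rw [show (ℓ (vertex c i) : ℕ) = b from congrArg Fin.val hℓi, hzero i (ne_of_mem_erase hi)] at this
  exact this.false

section neighbor

variable {m : ℕ}

/-- The other cell through the facet of `cj.1` opposite its vertex `cj.2`, with the index of its
vertex opposite that facet. -/
def neighbor (cj : Cell (m + 1) × Fin (m + 2)) : Cell (m + 1) × Fin (m + 2) :=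
  if h₀ : (cj.2 : ℕ) = 0 then (shift cj.1, Fin.last (m + 1))
  else if h₁ : (cj.2 : ℕ) = m + 1 then (unshift cj.1, 0)
  else (swapSteps cj.1 ⟨cj.2 - 1, by omega⟩ ⟨cj.2, by omega⟩, cj.2)

lemma neighbor_zero (c : Cell (m + 1)) : neighbor (c, 0) = (shift c, Fin.last (m + 1)) := rfl

lemma neighbor_last (c : Cell (m + 1)) : neighbor (c, Fin.last (m + 1)) = (unshift c, 0) := by
  simp [neighbor]

lemma neighbor_of_ne (c : Cell (m + 1)) {j : Fin (m + 2)} (h₀ : (j : ℕ) ≠ 0)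
    (h₁ : (j : ℕ) ≠ m + 1) :
    neighbor (c, j) = (swapSteps c ⟨j - 1, by omega⟩ ⟨j, by omega⟩, j) := by
  simp [neighbor, h₀, h₁]

lemma neighbor_neighbor (cj : Cell (m + 1) × Fin (m + 2)) : neighbor (neighbor cj) = cj := by
  obtain ⟨c, j⟩ := cj
  by_cases h₀ : (j : ℕ) = 0
  · rw [show j = 0 from Fin.ext h₀, neighbor_zero, neighbor_last, unshift_shift]
  by_cases h₁ : (j : ℕ) = m + 1
  · rw [show j = Fin.last (m + 1) from Fin.ext h₁, neighbor_last, neighbor_zero, shift_unshift]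
  rw [neighbor_of_ne c h₀ h₁, neighbor_of_ne _ h₀ h₁]
  simp only [swapSteps, mul_assoc, swap_mul_self, mul_one]

lemma neighbor_ne (cj : Cell (m + 1) × Fin (m + 2)) : neighbor cj ≠ cj := by
  obtain ⟨c, j⟩ := cj
  by_cases h₀ : (j : ℕ) = 0
  · simp [show j = 0 from Fin.ext h₀, neighbor_zero, Prod.ext_iff, Fin.ext_iff]
  by_cases h₁ : (j : ℕ) = m + 1
  · simp [show j = Fin.last (m + 1) from Fin.ext h₁, neighbor_last, Prod.ext_iff, Fin.ext_iff]
  rw [neighbor_of_ne c h₀ h₁]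
  simp only [ne_eq, Prod.ext_iff, swapSteps, mul_eq_left, and_true, swap_eq_one_iff, Fin.ext_iff]
  omega

lemma facet_neighbor (cj : Cell (m + 1) × Fin (m + 2)) :
    facet (neighbor cj).1 (neighbor cj).2 = facet cj.1 cj.2 := by
  obtain ⟨c, j⟩ := cj
  by_cases h₀ : (j : ℕ) = 0
  · rw [show j = 0 from Fin.ext h₀, neighbor_zero, facet_last, facet_zero]
    exact image_congr fun i _ => vertex_shift (Nat.lt_succ_iff.1 i.isLt)
  by_cases h₁ : (j : ℕ) = m + 1
  · rw [show j = Fin.last (m + 1) from Fin.ext h₁, neighbor_last, facet_last, facet_zero]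
    exact image_congr fun i _ => (vertex_unshift (by omega) (by omega)).trans (by simp)
  rw [neighbor_of_ne c h₀ h₁, facet, facet]
  exact image_congr fun i hi =>
    vertex_swapSteps_of_ne (by omega) _ (Fin.val_ne_of_ne (ne_of_mem_erase hi))

variable {k : ℕ} {ℓ : (Fin (m + 1) → ℤ) → Fin (m + 2)}

/-- The candidate neighbour fails to be a cell only when the door lies in a boundary face, and the
bottom face is the only boundary face a door can lie in. -/
lemma IsSpernerLabelling.isCell_neighbor (hℓ : IsSpernerLabelling k ℓ) {c : Cell (m + 1)}
    {j : Fin (m + 2)} (hc : IsCell k c) (hdoor : IsDoor (labels ℓ c) (Fin.last (m + 1)) j)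
    (hbot : ¬ IsBottom k c j) : IsCell k (neighbor (c, j)).1 := by
  by_cases h₀ : (j : ℕ) = 0
  · obtain rfl : j = 0 := Fin.ext h₀
    refine hc.shift_or.resolve_right fun hzero => hℓ.not_isDoor hc (b := 0) (by omega)
      (fun i hi => hzero i (Nat.one_le_iff_ne_zero.2 (Fin.val_ne_of_ne hi))) hdoor
  by_cases h₁ : (j : ℕ) = m + 1
  · obtain rfl : j = Fin.last (m + 1) := Fin.ext h₁
    rw [neighbor_last]
    refine hc.unshift_or.resolve_right fun hzero => hbot fun i hi => hzero i ?_
    have := Fin.val_ne_of_ne hi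
    have := i.isLt
    simp only [Fin.val_last] at *
    omega
  rw [neighbor_of_ne c h₀ h₁]
  refine (hc.swapSteps_or (by omega) _).resolve_right fun ⟨b, _, hb, hzero⟩ =>
    hℓ.not_isDoor hc hb (fun i hi => hzero i (Fin.val_ne_of_ne hi)) hdoor

lemma IsSpernerLabelling.neighbor_mem_interiorDoors (hℓ : IsSpernerLabelling k ℓ)
    {cj : Cell (m + 1) × Fin (m + 2)} (h : cj ∈ interiorDoors (m + 1) k ℓ) :
    neighbor cj ∈ interiorDoors (m + 1) k ℓ := by
  rw [mem_interiorDoors] at h ⊢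
  obtain ⟨hc, hdoor, hbot⟩ := h
  rw [isDoor_iff_facet, isBottom_iff_facet, facet_neighbor, ← isDoor_iff_facet,
    ← isBottom_iff_facet]
  exact ⟨hℓ.isCell_neighbor hc hdoor hbot, hdoor, hbot⟩

lemma IsSpernerLabelling.even_card_interiorDoors (hℓ : IsSpernerLabelling k ℓ) :
    Even #(interiorDoors (m + 1) k ℓ) :=
  even_card_of_involution neighbor (fun _ => hℓ.neighbor_mem_interiorDoors)
    (fun cj _ => neighbor_neighbor cj) (fun cj _ => neighbor_ne cj)

end neighbor

section lift

variable {m : ℕ}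

def extendLast (σ : Perm (Fin m)) : Perm (Fin (m + 1)) where
  toFun := Fin.snoc (fun i => (σ i).castSucc) (Fin.last m)
  invFun := Fin.snoc (fun i => (σ⁻¹ i).castSucc) (Fin.last m)
  left_inv i := by
    refine Fin.lastCases ?_ (fun y => ?_) i
    · simp only [Fin.snoc_last]
    · simp [Fin.snoc_castSucc]
  right_inv i := by
    refine Fin.lastCases ?_ (fun y => ?_) i
    · simp only [Fin.snoc_last]
    · simp [Fin.snoc_castSucc]

@[simp]
lemma extendLast_last (σ : Perm (Fin m)) : extendLast σ (Fin.last m) = Fin.last m := by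
  simp [extendLast]

@[simp]
lemma extendLast_castSucc (σ : Perm (Fin m)) (i : Fin m) :
    extendLast σ i.castSucc = (σ i).castSucc := by
  simp [extendLast]

@[simp]
lemma extendLast_inv_last (σ : Perm (Fin m)) : (extendLast σ)⁻¹ (Fin.last m) = Fin.last m := by
  rw [Perm.inv_eq_iff_eq, extendLast_last]

@[simp]
lemma extendLast_inv_castSucc (σ : Perm (Fin m)) (i : Fin m) :
    (extendLast σ)⁻¹ i.castSucc = (σ⁻¹ i).castSucc := by
  rw [Perm.inv_eq_iff_eq, extendLast_castSucc]
  simp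

def restrictLast (π : Perm (Fin (m + 1))) (hπ : π (Fin.last m) = Fin.last m) : Perm (Fin m) where
  toFun i := (π i.castSucc).castPred fun h =>
    (Fin.castSucc_lt_last i).ne (π.injective (h.trans hπ.symm))
  invFun i := (π⁻¹ i.castSucc).castPred fun h =>
    (Fin.castSucc_lt_last i).ne ((Perm.inv_eq_iff_eq.1 h).trans hπ)
  left_inv i := Fin.castSucc_injective _ (by simp)
  right_inv i := Fin.castSucc_injective _ (by simp)

lemma extendLast_restrictLast (π : Perm (Fin (m + 1))) (hπ : π (Fin.last m) = Fin.last m) :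
    extendLast (restrictLast π hπ) = π := by
  ext x
  refine Fin.lastCases ?_ (fun y => ?_) x
  · simp [hπ]
  · simp [restrictLast]

/-- The cells of the `m`-dimensional triangulation are the bottom facets (`p m = 0`) of cells one
dimension up. -/
def liftCell (c : Cell m) : Cell (m + 1) := (Fin.snoc c.1 0, extendLast c.2)

lemma liftCell_injective : Injective (liftCell (m := m)) := by
  intro c₁ c₂ h
  simp only [liftCell, Prod.ext_iff] at h
  refine Prod.ext (funext fun y => ?_) (Equiv.ext fun y => Fin.castSucc_injective _ ?_)
  · simpa using congrFun h.1 y.castSucc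
  · simpa using DFunLike.congr_fun h.2 y.castSucc

@[simp]
lemma paddedCoord_snoc_zero (q : Fin m → ℤ) (i : ℕ) :
    paddedCoord k (Fin.snoc q 0 : Fin (m + 1) → ℤ) i = paddedCoord k q i := by
  rcases Nat.eq_zero_or_pos i with rfl | h₀
  · simp
  rcases le_or_gt i m with hle | hgt
  · rw [paddedCoord_of_le h₀ (by omega), paddedCoord_of_le h₀ hle]
    exact Fin.snoc_castSucc (α := fun _ => ℤ) _ _ ⟨i - 1, by omega⟩
  rcases Nat.lt_or_ge (m + 1) i with hgt' | hle'
  · rw [paddedCoord_of_lt hgt', paddedCoord_of_lt (by omega)]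
  · obtain rfl : i = m + 1 := by omega
    rw [paddedCoord_of_le h₀ le_rfl, paddedCoord_of_lt (by omega)]
    exact Fin.snoc_last (α := fun _ => ℤ) _ _

@[simp]
lemma bary_snoc_zero (q : Fin m → ℤ) (i : ℕ) :
    bary k (Fin.snoc q 0 : Fin (m + 1) → ℤ) i = bary k q i := by
  simp [bary]

@[simp]
lemma inSimplex_snoc_zero {q : Fin m → ℤ} :
    InSimplex k (Fin.snoc q 0 : Fin (m + 1) → ℤ) ↔ InSimplex k q := by
  simp [InSimplex]

lemma InSimplex.snoc_one {q : Fin m → ℤ} (hq : InSimplex k q) (h : 1 ≤ paddedCoord k q m) :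
    InSimplex k (Fin.snoc q 1 : Fin (m + 1) → ℤ) := by
  have hsnoc : (Fin.snoc q 1 : Fin (m + 1) → ℤ) = Fin.snoc q 0 + Pi.single (Fin.last m) 1 := by
    ext x
    refine Fin.lastCases ?_ (fun y => ?_) x <;>
      simp [Fin.snoc_castSucc, (Fin.castSucc_lt_last _).ne]
  intro i
  rw [hsnoc, bary_add_single, bary_snoc_zero, Fin.val_last]
  have := hq i
  by_cases him : i = m
  · have hbary : bary k q i = paddedCoord k q m := by
      rw [bary, him, paddedCoord_of_lt (i := m + 1) (by omega), sub_zero]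
    simp only [if_neg (by omega : i ≠ m + 1), if_pos him]
    omega
  by_cases him' : i = m + 1
  · rw [him', bary_of_lt (by omega)]
    simp
  · simp only [if_neg him, if_neg him']
    omega

lemma vertex_liftCell (c : Cell m) {j : ℕ} (hj : j ≤ m) :
    vertex (liftCell c) j = Fin.snoc (vertex c j) 0 := by
  funext x
  refine Fin.lastCases ?_ (fun y => ?_) x
  · simp [vertex, liftCell, hj]
  · simp [vertex, liftCell]

lemma vertex_liftCell_top (c : Cell m) :
    vertex (liftCell c) (m + 1) = Fin.snoc (vertex c m) 1 := by
  funext x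
  refine Fin.lastCases ?_ (fun y => ?_) x <;> simp [liftCell]

lemma IsCell.lift (hk : 1 ≤ k) {c : Cell m} (hc : IsCell k c) : IsCell k (liftCell c) := by
  refine isCell_iff.2 fun j hj => ?_
  rcases hj.lt_or_eq with hj | rfl
  · rw [vertex_liftCell c (by omega), inSimplex_snoc_zero]
    exact hc j
  rw [vertex_liftCell_top]
  refine (hc m).snoc_one ?_
  rcases Nat.eq_zero_or_pos m with rfl | hm
  · rw [paddedCoord_zero]
    exact_mod_cast hk
  rw [paddedCoord_of_le hm le_rfl, vertex_self_apply]
  have := (vertex_zero (c := c) ▸ hc 0).nonneg ⟨m - 1, by omega⟩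
  omega

/-- On the bottom face a Sperner labelling never takes the value `Fin.last (m + 1)`; the junk
value `0` elsewhere is never used. -/
def bottomLabelling (ℓ : (Fin (m + 1) → ℤ) → Fin (m + 2)) (q : Fin m → ℤ) : Fin (m + 1) :=
  if h : ℓ (Fin.snoc q 0) = Fin.last (m + 1) then 0 else (ℓ (Fin.snoc q 0)).castPred h

variable {ℓ : (Fin (m + 1) → ℤ) → Fin (m + 2)}

lemma IsSpernerLabelling.castSucc_bottomLabelling (hℓ : IsSpernerLabelling k ℓ)
    {q : Fin m → ℤ} (hq : InSimplex k q) :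
    (bottomLabelling ℓ q).castSucc = ℓ (Fin.snoc q 0) := by
  have hne : ℓ (Fin.snoc q 0) ≠ Fin.last (m + 1) := fun h => by
    have := hℓ _ (inSimplex_snoc_zero.2 hq)
    rw [h, Fin.val_last, bary_snoc_zero, bary_of_lt (by omega)] at this
    exact this.false
  rw [bottomLabelling, dif_neg hne, Fin.castSucc_castPred]

lemma isSpernerLabelling_bottomLabelling (hℓ : IsSpernerLabelling k ℓ) :
    IsSpernerLabelling k (bottomLabelling ℓ) := fun q hq => by
  have := hℓ _ (inSimplex_snoc_zero.2 hq)
  rwa [← hℓ.castSucc_bottomLabelling hq, bary_snoc_zero, Fin.val_castSucc] at this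

lemma IsSpernerLabelling.labels_liftCell (hℓ : IsSpernerLabelling k ℓ) {c : Cell m}
    (hc : IsCell k c) (y : Fin (m + 1)) :
    labels ℓ (liftCell c) y.castSucc = (labels (bottomLabelling ℓ) c y).castSucc := by
  rw [labels, labels, hℓ.castSucc_bottomLabelling (hc y), Fin.val_castSucc,
    vertex_liftCell c (Nat.lt_succ_iff.1 y.isLt)]

lemma IsCell.of_lift {c : Cell m} (hc : IsCell k (liftCell c)) : IsCell k c :=
  isCell_iff.2 fun j hj => inSimplex_snoc_zero.1 (vertex_liftCell c hj ▸ hc j)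

lemma IsBottom.eq_last {c : Cell (m + 1)} {j : Fin (m + 2)} (hc : IsCell k c)
    (h : IsBottom k c j) : j = Fin.last (m + 1) := by
  by_contra hj
  have h₁ := h (Fin.last (m + 1)) (Ne.symm hj)
  rw [Fin.val_last, bary_self (by omega), vertex_self_apply] at h₁
  have := (vertex_zero (c := c) ▸ hc 0).nonneg ⟨m + 1 - 1, by omega⟩
  omega

lemma IsBottom.exists_liftCell {c : Cell (m + 1)} (h : IsBottom k c (Fin.last (m + 1))) :
    ∃ c' : Cell m, liftCell c' = c := by
  have hlast : (⟨m + 1 - 1, by omega⟩ : Fin (m + 1)) = Fin.last m := Fin.ext (by simp)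
  have hbase : c.1 (Fin.last m) = 0 := by
    have := h 0 (by simp [Fin.ext_iff])
    rwa [Fin.val_zero, bary_self (by omega), vertex_zero, hlast] at this
  have hperm : c.2 (Fin.last m) = Fin.last m := by
    have hm := h ⟨m, by omega⟩ (by simp [Fin.ext_iff])
    rw [bary_self (by omega), hlast, vertex, hbase, zero_add] at hm
    rw [eq_comm, ← Perm.inv_eq_iff_eq, Fin.ext_iff, Fin.val_last]
    have := (c.2⁻¹ (Fin.last m)).isLt
    split_ifs at hm with hlt
    · exact absurd hm one_ne_zero
    · simp only at hlt
      omega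
  refine ⟨(fun y => c.1 y.castSucc, restrictLast c.2 hperm), Prod.ext ?_ ?_⟩
  · funext x
    refine Fin.lastCases ?_ (fun y => ?_) x <;> simp [liftCell, hbase]
  · exact extendLast_restrictLast c.2 hperm

lemma IsSpernerLabelling.isDoor_liftCell_iff (hℓ : IsSpernerLabelling k ℓ) {c : Cell m}
    (hc : IsCell k c) :
    IsDoor (labels ℓ (liftCell c)) (Fin.last (m + 1)) (Fin.last (m + 1)) ↔
      Surjective (labels (bottomLabelling ℓ) c) := by
  have himage : (univ.erase (Fin.last (m + 1))).image (labels ℓ (liftCell c))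
      = (univ.image (labels (bottomLabelling ℓ) c)).image Fin.castSucc := by
    rw [← compl_singleton, ← Fin.image_castSucc, image_image, image_image]
    exact image_congr fun y _ => hℓ.labels_liftCell hc y
  rw [IsDoor, himage, ← compl_singleton, ← Fin.image_castSucc,
    (image_injective (Fin.castSucc_injective _)).eq_iff, ← coe_eq_univ, coe_image, coe_univ,
    Set.image_univ, Set.range_eq_univ]

lemma IsSpernerLabelling.card_bottomDoors (hℓ : IsSpernerLabelling k ℓ) (hk : 1 ≤ k) :
    #(bottomDoors (m + 1) k ℓ) = #(fullyLabelled m k (bottomLabelling ℓ)) := by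
  symm
  refine card_bij (fun c _ => (liftCell c, Fin.last (m + 1))) (fun c hc => ?_)
    (fun c₁ _ c₂ _ h => liftCell_injective (congrArg Prod.fst h)) (fun cj hcj => ?_)
  · rw [fullyLabelled, mem_filter, mem_cells] at hc
    refine mem_bottomDoors.2 ⟨hc.1.lift hk, (hℓ.isDoor_liftCell_iff hc.1).2 hc.2, ?_⟩
    intro i hi
    rw [vertex_liftCell c (by have := Fin.val_ne_of_ne hi; have := i.isLt; simp at *; omega),
      bary_snoc_zero, bary_of_lt (by omega)]
  · obtain ⟨hc, hdoor, hbot⟩ := mem_bottomDoors.1 hcj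
    obtain ⟨c, j⟩ := cj
    obtain rfl := hbot.eq_last hc
    obtain ⟨c', rfl⟩ := hbot.exists_liftCell
    have hc' : IsCell k c' := IsCell.of_lift hc
    refine ⟨c', ?_, rfl⟩
    rw [fullyLabelled, mem_filter, mem_cells]
    exact ⟨hc', (hℓ.isDoor_liftCell_iff hc').1 hdoor⟩

end lift

lemma card_fullyLabelled_zero (ℓ : (Fin 0 → ℤ) → Fin 1) : #(fullyLabelled 0 k ℓ) = 1 := by
  rw [card_eq_one]
  refine ⟨(0, 1), eq_singleton_iff_unique_mem.2 ⟨?_, fun c _ => Subsingleton.elim _ _⟩⟩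
  refine mem_filter.2 ⟨mem_cells.2 fun j i => ?_, fun b => ⟨0, Subsingleton.elim (α := Fin 1) _ _⟩⟩
  rcases Nat.eq_zero_or_pos i with rfl | hi
  · simp [bary, paddedCoord_of_lt]
  · rw [bary_of_lt hi]

theorem IsSpernerLabelling.odd_card_fullyLabelled (hk : 1 ≤ k) :
    ∀ {n} {ℓ : (Fin n → ℤ) → Fin (n + 1)}, IsSpernerLabelling k ℓ →
      Odd #(fullyLabelled n k ℓ)
  | 0, ℓ, _ => by rw [card_fullyLabelled_zero]; exact odd_one
  | m + 1, ℓ, hℓ => by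
    have hdoors := card_doors_mod_two (n := m + 1) (k := k) (ℓ := ℓ)
    have hsplit := card_bottomDoors_add_card_interiorDoors (n := m + 1) (k := k) (ℓ := ℓ)
    have hbottom := hℓ.card_bottomDoors hk
    have hlower := (isSpernerLabelling_bottomLabelling hℓ).odd_card_fullyLabelled hk
    have hinterior := hℓ.even_card_interiorDoors
    rw [Nat.odd_iff] at hlower ⊢
    rw [Nat.even_iff] at hinterior
    omega

theorem IsSpernerLabelling.exists_surjective_labels (hℓ : IsSpernerLabelling k ℓ) (hk : 1 ≤ k) :
    ∃ c : Cell n, IsCell k c ∧ Surjective (labels ℓ c) := by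
  obtain ⟨c, hc⟩ := card_pos.1 (hℓ.odd_card_fullyLabelled hk).pos
  rw [fullyLabelled, mem_filter, mem_cells] at hc
  exact ⟨c, hc⟩

noncomputable def toStdSimplex (k : ℕ) (p : Fin n → ℤ) : Fin (n + 1) → ℝ :=
  fun i => bary k p i / k

lemma InSimplex.toStdSimplex_mem (hk : 1 ≤ k) (hp : InSimplex k p) :
    toStdSimplex k p ∈ stdSimplex ℝ (Fin (n + 1)) := by
  refine ⟨fun i => div_nonneg (by exact_mod_cast hp i) k.cast_nonneg, ?_⟩
  simp only [toStdSimplex]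
  rw [← sum_div, ← Int.cast_sum, sum_bary, Int.cast_natCast, div_self (by positivity)]

lemma abs_paddedCoord_vertex_sub_le (c : Cell n) (j j' i : ℕ) :
    |paddedCoord k (vertex c j) i - paddedCoord k (vertex c j') i| ≤ 1 := by
  rcases Nat.eq_zero_or_pos i with rfl | h₀
  · simp
  rcases le_or_gt i n with hle | hgt
  · rw [paddedCoord_of_le h₀ hle, paddedCoord_of_le h₀ hle]
    simp only [vertex, add_sub_add_left_eq_sub]
    split_ifs <;> simp
  · simp [paddedCoord_of_lt hgt]

/-- Each barycentric coordinate is a difference of two coordinates, each of which varies by at most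
`1` over a cell. -/
lemma dist_toStdSimplex_vertex_le (c : Cell n) (j j' : ℕ) :
    dist (toStdSimplex k (vertex c j)) (toStdSimplex k (vertex c j')) ≤ 2 / k := by
  refine (dist_pi_le_iff (by positivity)).2 fun i => ?_
  rw [Real.dist_eq, toStdSimplex, toStdSimplex, ← sub_div, abs_div, Nat.abs_cast]
  refine div_le_div_of_nonneg_right ?_ k.cast_nonneg
  have h₁ := abs_paddedCoord_vertex_sub_le (k := k) c j j' i
  have h₂ := abs_paddedCoord_vertex_sub_le (k := k) c j j' (i + 1)
  rw [abs_le] at h₁ h₂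
  exact_mod_cast abs_le.2 ⟨by simp only [bary]; omega, by simp only [bary]; omega⟩

end Kuhn

open Kuhn in
theorem nonempty_iInter_of_stdSimplex_subset {n : ℕ} (G : Fin (n + 1) → Set (Fin (n + 1) → ℝ))
    (hG : ∀ i, IsClosed (G i)) (hcov : ∀ p ∈ stdSimplex ℝ (Fin (n + 1)), ∃ i, p i ≠ 0 ∧ p ∈ G i) :
    (⋂ i, G i).Nonempty := by
  by_contra hempty
  have hcover : stdSimplex ℝ (Fin (n + 1)) ⊆ ⋃ i, (G i)ᶜ := fun p _ => by
    rw [← Set.compl_iInter, Set.not_nonempty_iff_eq_empty.1 hempty, Set.compl_empty]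
    trivial
  obtain ⟨δ, hδ, hball⟩ := lebesgue_number_lemma_of_metric (isCompact_stdSimplex ℝ _)
    (fun i => (hG i).isOpen_compl) hcover
  obtain ⟨k, hk⟩ := exists_nat_gt (2 / δ)
  have hk₀ : (0 : ℝ) < k := (div_pos two_pos hδ).trans hk
  have hk₁ : 1 ≤ k := Nat.one_le_iff_ne_zero.2 fun h => by simp [h] at hk₀
  have hlabel (p : Fin n → ℤ) :
      ∃ i, InSimplex k p → toStdSimplex k p i ≠ 0 ∧ toStdSimplex k p ∈ G i := by
    by_cases hp : InSimplex k p
    · obtain ⟨i, hi⟩ := hcov _ (hp.toStdSimplex_mem hk₁)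
      exact ⟨i, fun _ => hi⟩
    · exact ⟨0, fun h => absurd h hp⟩
  choose ℓ hℓ using hlabel
  have hsperner : IsSpernerLabelling k ℓ := fun p hp =>
    lt_of_le_of_ne (hp _) fun h => (hℓ p hp).1 (by simp [toStdSimplex, ← h])
  obtain ⟨c, hc, hsurj⟩ := hsperner.exists_surjective_labels hk₁
  obtain ⟨i, hi⟩ := hball _ ((hc 0).toStdSimplex_mem hk₁)
  obtain ⟨j, rfl⟩ := hsurj i
  refine hi (Metric.mem_ball.2 ((dist_toStdSimplex_vertex_le c j 0).trans_lt ?_)) (hℓ _ (hc j)).2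
  rwa [div_lt_iff₀ hk₀, mul_comm, ← div_lt_iff₀ hδ]

lemma sum_smul_mem_convexHull_image_support {ι E : Type*} [Fintype ι] [AddCommGroup E]
    [Module ℝ E] {p : ι → ℝ} (hp : p ∈ stdSimplex ℝ ι) (x : ι → E) :
    ∑ i, p i • x i ∈ convexHull ℝ (x '' ({i | p i ≠ 0} : Finset ι)) := by
  classical
  rw [← sum_filter_of_ne fun i _ h => left_ne_zero_of_smul h]
  refine (convex_convexHull ℝ _).sum_mem (fun i _ => hp.1 i) ?_
    fun i hi => subset_convexHull ℝ _ (Set.mem_image_of_mem x hi)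
  rw [sum_filter_ne_zero]
  exact hp.2

theorem nonempty_iInter_of_convexHull_subset {X : Type*} [AddCommGroup X] [Module ℝ X]
    [TopologicalSpace X] [ContinuousAdd X] [ContinuousSMul ℝ X] {n : ℕ} (x : Fin (n + 1) → X)
    (F : Fin (n + 1) → Set X) (hF : ∀ i, IsClosed (F i))
    (hcov : ∀ t : Finset (Fin (n + 1)), convexHull ℝ (x '' t) ⊆ ⋃ i ∈ t, F i) :
    (⋂ i, F i).Nonempty := by
  let σ : (Fin (n + 1) → ℝ) → X := fun p => ∑ i, p i • x i
  have hσ : Continuous σ :=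
    continuous_finsetSum _ fun i _ => (continuous_apply i).smul continuous_const
  obtain ⟨p, hp⟩ := nonempty_iInter_of_stdSimplex_subset (fun i => stdSimplex ℝ _ ∩ σ ⁻¹' F i)
    (fun i => (isClosed_stdSimplex ℝ _).inter ((hF i).preimage hσ)) fun p hp => by
      obtain ⟨i, hi, hσi⟩ := Set.mem_iUnion₂.1 (hcov _ (sum_smul_mem_convexHull_image_support hp x))
      exact ⟨i, (mem_filter.1 hi).2, hp, hσi⟩
  exact ⟨σ p, Set.mem_iInter.2 fun i => (Set.mem_iInter.1 hp i).2⟩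

theorem KKM_finite_intersection_general
    {X : Type*} [AddCommGroup X] [Module ℝ X] [TopologicalSpace X]
    [IsTopologicalAddGroup X] [ContinuousSMul ℝ X]
    (B : Set X) (F : X → Set X) (hKKM : KKMFamily B F)
    (s : Finset X) (hsB : ↑s ⊆ B) :
    (⋂ x ∈ s, F x).Nonempty := by
  classical
  rcases s.eq_empty_or_nonempty with rfl | hs
  · simp
  obtain ⟨n, hn⟩ : ∃ n, #s = n + 1 := Nat.exists_eq_add_one.2 hs.card_pos
  let x : Fin (n + 1) → X := fun i => s.equivFin.symm (Fin.cast hn.symm i)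
  have hx : ∀ z ∈ s, ∃ i, x i = z := fun z hz => ⟨Fin.cast hn (s.equivFin ⟨z, hz⟩), by simp [x]⟩
  obtain ⟨y, hy⟩ := nonempty_iInter_of_convexHull_subset x (fun i => F (x i))
    (fun i => hKKM.1 _ (hsB (s.equivFin.symm _).2)) fun t => by
      have := hKKM.2 (t.image x) fun z hz => by
        obtain ⟨i, -, rfl⟩ := mem_image.1 hz
        exact hsB (s.equivFin.symm _).2
      simpa using this
  refine ⟨y, Set.mem_iInter₂.2 fun z hz => ?_⟩
  obtain ⟨i, rfl⟩ := hx z hz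
  exact Set.mem_iInter.1 hy i

/-- (Corollary of the KKM theorem.) If `{F x}_{x ∈ B}` is a family of
subsets of a topological vector space with the KKM property, indexed by a nonempty
`B ⊆ X`, then every finite subfamily has nonempty intersection. -/
theorem KKM_finite_intersection
    {X : Type*} [AddCommGroup X] [Module ℝ X] [TopologicalSpace X]
    [IsTopologicalAddGroup X] [ContinuousSMul ℝ X]
    (B : Set X) (hB : B.Nonempty) (F : X → Set X) (hKKM : KKMFamily B F)
    (s : Finset X) (hs : s.Nonempty) (hsB : ↑s ⊆ B) :
    (⋂ x ∈ s, F x).Nonempty :=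
  KKM_finite_intersection_general B F hKKM s hsB
end

section
/- Let C and D be convex subsets of a real vector space and let Φ : C × D → ℝ be such that f ↦ Φ(f,g) is concave for each g ∈ D and g ↦ Φ(f,g) is convex for each f ∈ C. Suppose (f̃,g̃) = Σ_{k=1}^m α_k (f_k,g_k) is a convex combination of points (f_k,g_k) ∈ C × D (α_k ≥ 0, Σα_k = 1). Then there exists k ∈ {1,…,m} with Φ(f_k, g̃) ≤ Φ(f̃, g_k). -/
/-- Let `C`, `D` be convex subsets of a real vector space and
`Φ : C × D → ℝ` be concave in the first and convex in the second variable. If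
`(f̃, g̃) = ∑ₖ αₖ (fₖ, gₖ)` is a convex combination of points of `C × D`, then
`Φ (fₖ) (g̃) ≤ Φ (f̃) (gₖ)` for some `k`. -/
theorem exists_index_saddle_inequality
    {V : Type*} [AddCommGroup V] [Module ℝ V]
    (C D : Set V) (hC : Convex ℝ C) (hD : Convex ℝ D)
    (Φ : V → V → ℝ)
    (hconc : ∀ g ∈ D, ConcaveOn ℝ C (fun f => Φ f g))
    (hconv : ∀ f ∈ C, ConvexOn ℝ D (Φ f))
    (m : ℕ) (hm : 0 < m)
    (f : Fin m → V) (g : Fin m → V) (α : Fin m → ℝ)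
    (hα : ∀ k, 0 ≤ α k) (hαsum : ∑ k, α k = 1)
    (hfC : ∀ k, f k ∈ C) (hgD : ∀ k, g k ∈ D) :
    ∃ k : Fin m, Φ (f k) (∑ j, α j • g j) ≤ Φ (∑ j, α j • f j) (g k) := by
  by_contra h
  push_neg at h
  set ft := ∑ j, α j • f j with hft
  set gt := ∑ j, α j • g j with hgt
  have hftC : ft ∈ C := hC.sum_mem (fun i _ => hα i) hαsum (fun i _ => hfC i)
  have hgtD : gt ∈ D := hD.sum_mem (fun i _ => hα i) hαsum (fun i _ => hgD i)
  have h1 : (∑ k, α k • Φ (f k) gt) ≤ Φ ft gt :=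
    (hconc gt hgtD).le_map_sum (fun i _ => hα i) hαsum (fun i _ => hfC i)
  have h2 : Φ ft gt ≤ ∑ k, α k • Φ ft (g k) :=
    (hconv ft hftC).map_sum_le (fun i _ => hα i) hαsum (fun i _ => hgD i)
  have hex : ∃ k, 0 < α k := by
    by_contra hc
    push_neg at hc
    have : ∑ k, α k = 0 := Finset.sum_eq_zero fun k _ => le_antisymm (hc k) (hα k)
    rw [hαsum] at this; norm_num at this
  obtain ⟨k0, hk0⟩ := hex
  have h3 : (∑ k, α k • Φ ft (g k)) < ∑ k, α k • Φ (f k) gt := by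
    apply Finset.sum_lt_sum
    · intro i _
      exact smul_le_smul_of_nonneg_left (h i).le (hα i)
    · exact ⟨k0, Finset.mem_univ k0, smul_lt_smul_of_pos_left (h k0) hk0⟩
  linarith
end
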